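/- arXiv:2104.01186 — 5 statements merged into one kernel-verified Lean document; each statement's English description precedes it below -/
import Mathlib

section
/- The number of Dyck paths of semilength 2n that avoid the consecutive step patterns UUU and DUD and start with UUD (when nonempty) equals the n-th Catalan number. -/
/-- Every prefix of the path has nonnegative sum (the path stays weakly above the x-axis). -/
def NonnegPrefixes (w : List ℤ) : Prop := ∀ p ∈ w.inits, 0 ≤ p.sum

/-- A Dyck word: steps U = 1 and D = -1, nonnegative prefixes, ending at height 0. -/
def IsDyckWord (w : List ℤ) : Prop :=
  (∀ s ∈ w, s = 1 ∨ s = -1) ∧ NonnegPrefixes w ∧ w.sum = 0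

/-- A Motzkin path: steps U = 1, F = 0, D = -1, nonnegative prefixes, ending at height 0. -/
def IsMotzkinWord (w : List ℤ) : Prop :=
  (∀ s ∈ w, s = 1 ∨ s = 0 ∨ s = -1) ∧ NonnegPrefixes w ∧ w.sum = 0

/-- A Dyck meander with catastrophes: steps U = 1, D = -1, D_i = -i (i ≥ 2),
nonnegative, and every catastrophe step D_i (i ≥ 2) lands exactly at height 0. -/
def IsDyckMeanderCat (w : List ℤ) : Prop :=
  (∀ s ∈ w, s = 1 ∨ s ≤ -1) ∧ NonnegPrefixes w ∧
    ∀ i, i < w.length → w.getD i 0 ≤ -2 → (w.take (i+1)).sum = 0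

/-- A Motzkin meander with catastrophes: steps U = 1, F = 0, D = -1, D_i = -i (i ≥ 2),
nonnegative, every catastrophe landing exactly at height 0. -/
def IsMotzkinMeanderCat (w : List ℤ) : Prop :=
  (∀ s ∈ w, s ≤ 1) ∧ NonnegPrefixes w ∧
    ∀ i, i < w.length → w.getD i 0 ≤ -2 → (w.take (i+1)).sum = 0

def IsDyckExcursionCat (w : List ℤ) : Prop := IsDyckMeanderCat w ∧ w.sum = 0

def IsMotzkinExcursionCat (w : List ℤ) : Prop := IsMotzkinMeanderCat w ∧ w.sum = 0

/-- The factor `pat` occurs in `w` starting at position `i`. -/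
def OccursAt (pat w : List ℤ) (i : ℕ) : Prop := pat <+: w.drop i

/-- `w` has no occurrence of the factor `pat`. -/
def Avoids (pat w : List ℤ) : Prop := ∀ i, ¬ OccursAt pat w i

/-- `w` has no occurrence of `pat` starting at height h > 0. -/
def AvoidsAtPosHeight (pat w : List ℤ) : Prop :=
  ∀ i, OccursAt pat w i → (w.take i).sum ≤ 0

/-- `w` has no occurrence of `pat` starting at height h ≥ 2. -/
def AvoidsAtHeightGe2 (pat w : List ℤ) : Prop :=
  ∀ i, OccursAt pat w i → (w.take i).sum < 2

def pUUU : List ℤ := [1, 1, 1]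
def pDUD : List ℤ := [-1, 1, -1]
def pUUD : List ℤ := [1, 1, -1]
def pUD : List ℤ := [1, -1]
def pDU : List ℤ := [-1, 1]

/-!
The substitution `U ↦ UUD`, `D ↦ D` maps Dyck paths of semilength `n` bijectively onto these
paths. It preserves the height at block boundaries and is nonnegative inside a `UUD` block, so
Dyck paths go to Dyck paths; conversely, avoiding `UUU` and `DUD`, starting with `UUD` and ending
with `D` force a path to be a concatenation of blocks `UUD` and `D`.
-/

open List DyckStep

def substUUD : List DyckStep → List ℤ
  | [] => []
  | U :: l => 1 :: 1 :: -1 :: substUUD l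
  | D :: l => -1 :: substUUD l

lemma substUUD_append (l₁ l₂ : List DyckStep) :
    substUUD (l₁ ++ l₂) = substUUD l₁ ++ substUUD l₂ := by
  induction l₁ with
  | nil => rfl
  | cons s l₁ ih => cases s <;> simp [substUUD, ih]

lemma sum_substUUD (l : List DyckStep) :
    (substUUD l).sum = l.count U - l.count D := by
  induction l with
  | nil => rfl
  | cons s l ih => cases s <;> simp [substUUD, ih] <;> ring

lemma length_substUUD (l : List DyckStep) :
    (substUUD l).length = 3 * l.count U + l.count D := by
  induction l with
  | nil => rfl
  | cons s l ih => cases s <;> simp [substUUD, ih] <;> ring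

lemma substUUD_injective : Function.Injective substUUD := by
  intro l₁
  induction l₁ with
  | nil => rintro (_ | ⟨_ | _, _⟩) h <;> simp_all [substUUD]
  | cons s l₁ ih =>
    rintro (_ | ⟨_ | _, l₂⟩) h <;> cases s <;> simp [substUUD] at h ⊢ <;> exact ih h

lemma eq_one_or_eq_neg_one_of_mem_substUUD {l : List DyckStep} {s : ℤ} (hs : s ∈ substUUD l) :
    s = 1 ∨ s = -1 := by
  induction l with
  | nil => simp [substUUD] at hs
  | cons t l ih => cases t <;> simp [substUUD] at hs <;> tauto

lemma avoids_nil (a : ℤ) (pat : List ℤ) : Avoids (a :: pat) [] := by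
  simp [Avoids, OccursAt]

lemma avoids_cons {pat w : List ℤ} {a : ℤ} :
    Avoids pat (a :: w) ↔ ¬ pat <+: a :: w ∧ Avoids pat w :=
  ⟨fun h => ⟨h 0, fun i => h (i + 1)⟩, fun ⟨h₀, h⟩ i => by cases i; exacts [h₀, h _]⟩

lemma avoids_UUU_substUUD (l : List DyckStep) : Avoids pUUU (substUUD l) := by
  induction l with
  | nil => exact avoids_nil _ _
  | cons s l ih => cases s <;> simp_all [substUUD, avoids_cons, pUUU]

lemma avoids_DUD_neg_one_cons_substUUD (l : List DyckStep) : Avoids pDUD (-1 :: substUUD l) := by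
  induction l with
  | nil => simp [substUUD, avoids_cons, avoids_nil, pDUD]
  | cons s l ih => cases s <;> simp_all [substUUD, avoids_cons, pDUD]

lemma nonneg_add_sum_of_prefix_substUUD {l : List DyckStep} {c : ℤ}
    (h : ∀ i, 0 ≤ c + (l.take i).count U - (l.take i).count D) :
    ∀ p, p <+: substUUD l → 0 ≤ c + p.sum := by
  induction l generalizing c with
  | nil => simpa [substUUD] using h 0
  | cons s l ih =>
    have h₀ : 0 ≤ c := by simpa using h 0
    cases s <;> simp only [substUUD, prefix_cons_iff]
    · have ih' := @ih (c + 1) fun i => by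
        have := h (i + 1)
        push_cast [take_succ_cons, count_cons_self, count_cons_of_ne (by decide : U ≠ D)] at this
        linarith
      rintro p (rfl | ⟨_, rfl, rfl | ⟨_, rfl, rfl | ⟨p, rfl, hp⟩⟩⟩) <;>
        simp only [sum_cons, sum_nil]
      · linarith
      · linarith
      · linarith
      · linarith [ih' p hp]
    · have ih' := @ih (c - 1) fun i => by
        have := h (i + 1)
        push_cast [take_succ_cons, count_cons_self, count_cons_of_ne (by decide : D ≠ U)] at this
        linarith
      rintro p (rfl | ⟨p, rfl, hp⟩) <;> simp only [sum_cons, sum_nil]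
      · linarith
      · linarith [ih' p hp]

lemma count_D_le_count_U_take_of_nonnegPrefixes {l : List DyckStep}
    (h : NonnegPrefixes (substUUD l)) (i : ℕ) : (l.take i).count D ≤ (l.take i).count U := by
  have hpre : substUUD (l.take i) <+: substUUD l :=
    ⟨substUUD (l.drop i), by rw [← substUUD_append, take_append_drop]⟩
  have := h _ (mem_inits _ _ |>.2 hpre)
  rw [sum_substUUD] at this
  omega

lemma exists_eq_one_cons_neg_one_cons {t : List ℤ} (ht : ∀ s ∈ t, s = 1 ∨ s = -1)
    (hUUU : ¬ pUUU <+: 1 :: t) (hDUD : ¬ pDUD <+: -1 :: 1 :: t) (hsum : (1 :: t).sum ≤ 0) :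
    ∃ r, t = 1 :: -1 :: r := by
  rcases t with _ | ⟨a, _ | ⟨b, r⟩⟩
  · simp at hsum
  · rcases ht a mem_cons_self with rfl | rfl
    · simp at hsum
    · simp [pDUD] at hDUD
  · rcases ht a (by simp) with rfl | rfl <;> rcases ht b (by simp) with rfl | rfl
    · simp [pUUU] at hUUU
    · exact ⟨r, rfl⟩
    all_goals simp [pDUD] at hDUD

/-- Prepending `D` keeps the hypotheses stable under removing a leading block: a `U` after a `D`
must start `UUD`, and the nonpositive suffix sums rule out a trailing `U` or `UU`. -/
theorem exists_substUUD_eq_of_avoids (w : List ℤ) (hw : ∀ s ∈ w, s = 1 ∨ s = -1)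
    (hUUU : Avoids pUUU w) (hDUD : Avoids pDUD (-1 :: w)) (hsuf : ∀ k, (w.drop k).sum ≤ 0) :
    ∃ l, substUUD l = w := by
  match w with
  | [] => exact ⟨[], rfl⟩
  | a :: t =>
    have ht (s : ℤ) (hs : s ∈ t) : s = 1 ∨ s = -1 := hw s (mem_cons_of_mem _ hs)
    rcases hw a mem_cons_self with rfl | rfl
    · obtain ⟨r, rfl⟩ := exists_eq_one_cons_neg_one_cons ht (hUUU 0) (hDUD 0) (hsuf 0)
      obtain ⟨l, rfl⟩ := exists_substUUD_eq_of_avoids r (fun s hs => ht s (by simp [hs]))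
        (fun i => hUUU (i + 3)) (fun i => hDUD (i + 3)) (fun k => hsuf (k + 3))
      exact ⟨U :: l, rfl⟩
    · obtain ⟨l, rfl⟩ := exists_substUUD_eq_of_avoids t ht
        (fun i => hUUU (i + 1)) (fun i => hDUD (i + 1)) (fun k => hsuf (k + 1))
      exact ⟨D :: l, rfl⟩
termination_by w.length

lemma sum_drop_nonpos_of_isDyckWord {w : List ℤ} (hw : IsDyckWord w) (k : ℕ) :
    (w.drop k).sum ≤ 0 := by
  have := hw.2.1 _ (mem_inits _ _ |>.2 (take_prefix k w))
  have := sum_take_add_sum_drop w k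
  linarith [hw.2.2]

namespace DyckWord

lemma isDyckWord_substUUD (p : DyckWord) : IsDyckWord (substUUD p) := by
  refine ⟨fun _ => eq_one_or_eq_neg_one_of_mem_substUUD, fun q hq => ?_, ?_⟩
  · simpa using nonneg_add_sum_of_prefix_substUUD (c := 0)
      (fun i => by have := p.count_D_le_count_U i; omega) q ((mem_inits _ _).1 hq)
  · rw [sum_substUUD, p.count_U_eq_count_D, sub_self]

lemma length_substUUD_eq (p : DyckWord) : (substUUD p).length = 2 * (2 * p.semilength) := by
  rw [length_substUUD, semilength, ← p.count_U_eq_count_D]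
  ring

lemma substUUD_eq_nil_or_UUD_prefix (p : DyckWord) : substUUD p = [] ∨ pUUD <+: substUUD p := by
  rcases hp : p.toList with _ | ⟨s, l⟩
  · exact .inl rfl
  · obtain rfl : s = U := by simpa [hp] using p.head_eq_U (by simp [hp])
    exact .inr ⟨substUUD l, rfl⟩

end DyckWord

lemma exists_dyckWord_substUUD_eq {n : ℕ} {w : List ℤ} (hw : IsDyckWord w)
    (hlen : w.length = 2 * (2 * n)) (hUUU : Avoids pUUU w) (hDUD : Avoids pDUD w)
    (hstart : w = [] ∨ pUUD <+: w) :
    ∃ p : DyckWord, p.semilength = n ∧ substUUD p = w := by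
  have hDUD' : Avoids pDUD (-1 :: w) := by
    refine avoids_cons.2 ⟨?_, hDUD⟩
    rcases hstart with rfl | ⟨t, rfl⟩ <;> simp [pDUD, pUUD]
  obtain ⟨l, rfl⟩ := exists_substUUD_eq_of_avoids w hw.1 hUUU hDUD'
    (sum_drop_nonpos_of_isDyckWord hw)
  have hsum := hw.2.2
  rw [sum_substUUD] at hsum
  rw [length_substUUD] at hlen
  exact ⟨⟨l, by omega, count_D_le_count_U_take_of_nonnegPrefixes hw.2.1⟩, by
    simp only [DyckWord.semilength]; omega, rfl⟩

noncomputable def substUUDEquiv (n : ℕ) :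
    {p : DyckWord // p.semilength = n} ≃ {w : List ℤ // IsDyckWord w ∧
      w.length = 2 * (2 * n) ∧ Avoids pUUU w ∧ Avoids pDUD w ∧ (w = [] ∨ pUUD <+: w)} :=
  .ofBijective
    (fun p => ⟨substUUD p.1, p.1.isDyckWord_substUUD, by rw [p.1.length_substUUD_eq, p.2],
      avoids_UUU_substUUD _, fun i => avoids_DUD_neg_one_cons_substUUD _ (i + 1),
      p.1.substUUD_eq_nil_or_UUD_prefix⟩)
    ⟨fun p q h => Subtype.ext (DyckWord.ext (substUUD_injective (congrArg Subtype.val h))),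
      fun ⟨_, hw, hlen, hUUU, hDUD, hstart⟩ => by
        obtain ⟨p, hp, rfl⟩ := exists_dyckWord_substUUD_eq hw hlen hUUU hDUD hstart
        exact ⟨⟨p, hp⟩, rfl⟩⟩

/-- The number of Dyck paths of semilength 2n avoiding the factors UUU and DUD and
starting with UUD (when nonempty) equals the n-th Catalan number. -/
theorem stmt_0 (n : ℕ) :
    Nat.card {w : List ℤ // IsDyckWord w ∧ w.length = 2 * (2 * n) ∧
      Avoids pUUU w ∧ Avoids pDUD w ∧ (w = [] ∨ pUUD <+: w)} = catalan n := by
  rw [← Nat.card_congr (substUUDEquiv n), Nat.card_eq_fintype_card,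
    DyckWord.card_dyckWord_semilength_eq_catalan]
end

section
/- Every nonempty Dyck path avoiding the factors UUU and DUD and starting with UUD decomposes uniquely as UUD·α·D·β, where α and β are (possibly empty) Dyck paths avoiding UUU and DUD and starting with UUD when nonempty. -/
lemma nonneg_take {w : List ℤ} (h : NonnegPrefixes w) (n : ℕ) : 0 ≤ (w.take n).sum :=
  h _ ((List.mem_inits _ _).2 (List.take_prefix n w))

lemma avoids_drop {pat w : List ℤ} (h : Avoids pat w) (a : ℕ) : Avoids pat (w.drop a) :=
  fun i hocc => h (a + i) (by rwa [OccursAt, List.drop_drop] at hocc)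

lemma avoids_take {pat w : List ℤ} (h : Avoids pat w) (b : ℕ) : Avoids pat (w.take b) := by
  intro i hocc
  apply h i
  rw [OccursAt, List.drop_take] at hocc
  exact hocc.trans (List.take_prefix _ _)

lemma startsUUD {v : List ℤ} (hstep : ∀ s ∈ v, s = 1 ∨ s = -1)
    (hnn : NonnegPrefixes v) (hsum : v.sum = 0) (hne : v ≠ [])
    (hUUU : Avoids pUUU v) (hUD : ¬ pUD <+: v) : pUUD <+: v := by
  match v with
  | [] => exact absurd rfl hne
  | a :: v1 =>
    have ha : a = 1 := by
      rcases hstep a (by simp) with h | h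
      · exact h
      · exfalso
        have := hnn [a] ((List.mem_inits _ _).2 ⟨v1, rfl⟩)
        simp [h] at this
    subst ha
    match v1 with
    | [] => simp at hsum
    | b :: v2 =>
      have hb : b = 1 := by
        rcases hstep b (by simp) with h | h
        · exact h
        · exact absurd ⟨v2, by simp [pUD, h]⟩ hUD
      subst hb
      match v2 with
      | [] => simp at hsum
      | c :: v3 =>
        have hc : c = -1 := by
          rcases hstep c (by simp) with h | h
          · exact absurd ⟨v3, by simp [pUUU, h]⟩ (hUUU 0)
          · exact h
        subst hc
        exact ⟨v3, by simp [pUUD]⟩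

lemma decomp_aux {x y x' y' : List ℤ} (hx' : NonnegPrefixes x') (hx0 : x.sum = 0)
    (hl : x.length < x'.length) (h : x ++ [-1] ++ y = x' ++ [-1] ++ y') : False := by
  have h1 : (x ++ [-1] ++ y).take (x.length + 1) = x ++ [-1] := by
    rw [List.append_assoc, List.take_append]
    simp
  have h2 : (x' ++ [-1] ++ y').take (x.length + 1) = x'.take (x.length + 1) := by
    rw [List.append_assoc, List.take_append_of_le_length (by omega)]
  rw [h, h2] at h1
  have hnn := nonneg_take hx' (x.length + 1)
  rw [h1] at hnn
  simp [hx0] at hnn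

lemma decomp_eq {x y x' y' : List ℤ}
    (hx : NonnegPrefixes x) (hx0 : x.sum = 0)
    (hx' : NonnegPrefixes x') (hx'0 : x'.sum = 0)
    (h : x ++ [-1] ++ y = x' ++ [-1] ++ y') : x = x' ∧ y = y' := by
  have hlen : x.length = x'.length := by
    rcases lt_trichotomy x.length x'.length with hl | hl | hl
    · exact absurd h (fun hh => decomp_aux hx' hx0 hl hh)
    · exact hl
    · exact absurd h.symm (fun hh => decomp_aux hx hx'0 hl hh)
  rw [List.append_assoc, List.append_assoc] at h
  obtain ⟨hxe, hye⟩ := List.append_inj h hlen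
  exact ⟨hxe, by simpa using hye⟩

/-- Every nonempty Dyck path avoiding UUU and DUD and starting with UUD decomposes
uniquely as UUD·α·D·β with α, β again in the family. -/
theorem stmt_2 (w : List ℤ) (hw : IsDyckWord w) (h1 : Avoids pUUU w)
    (h2 : Avoids pDUD w) (h3 : pUUD <+: w) :
    ∃! p : List ℤ × List ℤ,
      (IsDyckWord p.1 ∧ Avoids pUUU p.1 ∧ Avoids pDUD p.1 ∧ (p.1 = [] ∨ pUUD <+: p.1)) ∧
      (IsDyckWord p.2 ∧ Avoids pUUU p.2 ∧ Avoids pDUD p.2 ∧ (p.2 = [] ∨ pUUD <+: p.2)) ∧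
      w = pUUD ++ p.1 ++ [-1] ++ p.2 := by
  obtain ⟨t, rfl⟩ := h3
  obtain ⟨hstep, hnn, hsum⟩ := hw
  set w := pUUD ++ t with hwdef
  -- first return to 0
  have hex : ∃ k, 0 < k ∧ (w.take k).sum = 0 := by
    refine ⟨w.length, by simp [hwdef, pUUD], by simpa using hsum⟩
  obtain ⟨k, hk1, hk2, hkle, hmin⟩ : ∃ k, 0 < k ∧ (w.take k).sum = 0 ∧ k ≤ w.length ∧
      ∀ j, 0 < j → j < k → 1 ≤ (w.take j).sum := by
    refine ⟨Nat.find hex, (Nat.find_spec hex).1, (Nat.find_spec hex).2,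
      Nat.find_le ⟨by simp [hwdef, pUUD], by simpa using hsum⟩, ?_⟩
    intro j hj hjk
    have h0 := nonneg_take hnn j
    have := Nat.find_min hex hjk
    simp only [hj, true_and] at this
    omega
  -- prefix sums over the UUD part
  have hS : ∀ j, (w.take (3 + j)).sum = 1 + (t.take j).sum := by
    intro j
    rw [hwdef]
    rw [show (3:ℕ) = pUUD.length from rfl, List.take_add, List.take_left, List.drop_left]
    simp [pUUD]
  have hk4 : 4 ≤ k := by
    by_contra hcon
    push_neg at hcon
    have hk2' := hk2
    rcases (by omega : k = 1 ∨ k = 2 ∨ k = 3) with h | h | h <;>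
      rw [h] at hk2' <;> simp [hwdef, pUUD] at hk2' 
  obtain ⟨m, rfl⟩ : ∃ m, k = m + 4 := ⟨k - 4, by omega⟩
  have hmlt : m < t.length := by simp [hwdef, pUUD] at hkle; omega
  have hwlen : m + 3 < w.length := by simp [hwdef, pUUD]; omega
  -- the step at position m+3 is -1 and height before it is 1
  have hstepk := List.sum_take_succ w (m + 3) hwlen
  have hdm3 : w.drop (m + 3) = t.drop m := by
    rw [hwdef, show m + 3 = pUUD.length + m by show m + 3 = 3 + m; omega,
      ← List.drop_drop, List.drop_left]
  have hwm : w[m + 3]'hwlen = t[m]'hmlt := by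
    have h := hdm3
    rw [List.drop_eq_getElem_cons hwlen, List.drop_eq_getElem_cons hmlt] at h
    exact (List.cons_eq_cons.mp h).1
  have hgm : t[m]'hmlt = 1 ∨ t[m]'hmlt = -1 := by
    apply hstep
    rw [hwdef]
    exact List.mem_append_right _ (List.getElem_mem _)
  have hSm3 : 1 ≤ (w.take (m + 3)).sum := hmin (m + 3) (by omega) (by omega)
  rw [show m + 3 + 1 = m + 4 by ring, hk2, hwm] at hstepk
  have htm : t[m]'hmlt = -1 := by rcases hgm with h | h <;> omega
  have hSm3' : (w.take (m + 3)).sum = 1 := by omega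
  -- α and β
  set α : List ℤ := t.take m with hαdef
  set β : List ℤ := t.drop (m + 1) with hβdef
  have htsplit : t = α ++ [-1] ++ β := by
    rw [hαdef, hβdef]
    nth_rewrite 1 [← List.take_append_drop m t]
    rw [List.drop_eq_getElem_cons hmlt, htm]
    simp
  have hαsum : α.sum = 0 := by
    have := hS m
    rw [show 3 + m = m + 3 by ring, hSm3'] at this
    rw [hαdef]
    omega
  have hαnn : NonnegPrefixes α := by
    intro p hp
    rw [List.mem_inits] at hp
    have hple : p.length ≤ m := le_trans hp.length_le (by simp [hαdef])
    rw [List.prefix_iff_eq_take] at hp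
    have hpe : p = t.take p.length := by
      conv_lhs => rw [hp]
      rw [hαdef, List.take_take, min_eq_left hple]
    have := hmin (3 + p.length) (by omega) (by omega)
    rw [hS p.length] at this
    rw [hpe]; omega
  have hdropβ : w.drop (m + 4) = β := by
    rw [hwdef, hβdef, show m + 4 = pUUD.length + (m+1) by show m + 4 = 3 + (m+1); omega,
      ← List.drop_drop, List.drop_left]
  have hβsum : β.sum = 0 := by
    have : w.sum = (w.take (m+4)).sum + (w.drop (m+4)).sum := by
      nth_rewrite 1 [← List.take_append_drop (m+4) w]
      simp
    rw [hsum, hk2, hdropβ] at this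
    omega
  have hβnn : NonnegPrefixes β := by
    intro p hp
    rw [List.mem_inits, List.prefix_iff_eq_take] at hp
    have hkey : (w.take (m + 4 + p.length)).sum = (w.take (m+4)).sum + p.sum := by
      rw [List.take_add, List.sum_append, hdropβ, ← hp]
    have h0 := nonneg_take hnn (m + 4 + p.length)
    rw [hkey, hk2] at h0
    omega
  have hαstep : ∀ s ∈ α, s = 1 ∨ s = -1 := fun s hs =>
    hstep s (List.mem_append_right _ (List.mem_of_mem_take hs))
  have hβstep : ∀ s ∈ β, s = 1 ∨ s = -1 := fun s hs =>
    hstep s (List.mem_append_right _ (List.mem_of_mem_drop hs))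
  have hdrop3 : w.drop 3 = t := by rw [hwdef]; simp [pUUD]
  have hα1 : Avoids pUUU α := by
    have := avoids_take (avoids_drop h1 3) m
    rwa [hdrop3] at this
  have hα2 : Avoids pDUD α := by
    have := avoids_take (avoids_drop h2 3) m
    rwa [hdrop3] at this
  have hβ1 : Avoids pUUU β := by
    have := avoids_drop (avoids_drop h1 3) (m+1)
    rwa [hdrop3] at this
  have hβ2 : Avoids pDUD β := by
    have := avoids_drop (avoids_drop h2 3) (m+1)
    rwa [hdrop3] at this
  have hαUD : ¬ pUD <+: α := by
    intro hpre
    have hpre' : pUD <+: t := hpre.trans (List.take_prefix _ _)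
    obtain ⟨s, rfl⟩ := hpre'
    apply h2 2
    refine ⟨s, ?_⟩
    simp [hwdef, pUUD, pUD, pDUD]
  have hβUD : ¬ pUD <+: β := by
    intro hpre
    apply h2 (m + 3)
    have hdm : w.drop (m + 3) = -1 :: β := by
      rw [hdm3, List.drop_eq_getElem_cons hmlt, htm, hβdef]
    show pDUD <+: w.drop (m + 3)
    rw [hdm]
    obtain ⟨s, hs⟩ := hpre
    refine ⟨s, ?_⟩
    rw [← hs]
    rfl
  have hαst : α = [] ∨ pUUD <+: α := by
    rcases eq_or_ne α [] with h | h
    · exact Or.inl h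
    · exact Or.inr (startsUUD hαstep hαnn hαsum h hα1 hαUD)
  have hβst : β = [] ∨ pUUD <+: β := by
    rcases eq_or_ne β [] with h | h
    · exact Or.inl h
    · exact Or.inr (startsUUD hβstep hβnn hβsum h hβ1 hβUD)
  refine ⟨(α, β), ⟨⟨⟨hαstep, hαnn, hαsum⟩, hα1, hα2, hαst⟩,
    ⟨⟨hβstep, hβnn, hβsum⟩, hβ1, hβ2, hβst⟩, by rw [hwdef]; simp [htsplit]⟩, ?_⟩
  rintro ⟨x, y⟩ ⟨⟨⟨-, hxnn, hxsum⟩, -⟩, ⟨⟨-, -, -⟩, -⟩, heq⟩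
  have heq' : x ++ [-1] ++ y = α ++ [-1] ++ β := by
    have h' : pUUD ++ (x ++ [-1] ++ y) = pUUD ++ (α ++ [-1] ++ β) := by
      rw [← List.append_assoc, ← List.append_assoc, ← heq, hwdef, htsplit]
    exact List.append_cancel_left h'
  obtain ⟨hxα, hyβ⟩ := decomp_eq hxnn hxsum hαnn hαsum heq'
  exact Prod.ext hxα hyβ
end

section
/- The map φ defined recursively by φ(ε)=ε; φ(Uα)=UD·φ(α); φ(UαDβ)=UUD·φ(α)·D·φ(β); φ(UαD₂β)=U·φ(αD)·D·φ(β); and φ(UαD_iβ)=UD·φ(αD_{i-1})·φ(β) for i≥3, sends every Dyck meander with catastrophes of length n to a Dyck path of semilength n. -/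
/-- The recursive equations defining the paper's map φ from Dyck meanders with
catastrophes to Dyck paths:
φ(ε) = ε; φ(Uα) = UD φ(α); φ(UαDβ) = UUD φ(α) D φ(β);
φ(UαD₂β) = U φ(αD) D φ(β); φ(UαD_iβ) = UD φ(αD_{i-1}) φ(β) for i ≥ 3. -/
def PhiSpec (φ : List ℤ → List ℤ) : Prop :=
  (φ [] = []) ∧
  (∀ α : List ℤ, (∀ s ∈ α, s = 1 ∨ s = -1) → NonnegPrefixes α →
      φ (1 :: α) = 1 :: -1 :: φ α) ∧
  (∀ α β : List ℤ, (∀ s ∈ α, s = 1 ∨ s = -1) → NonnegPrefixes α → α.sum = 0 →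
      IsDyckMeanderCat β →
      φ (1 :: (α ++ -1 :: β)) = 1 :: 1 :: -1 :: (φ α ++ -1 :: φ β)) ∧
  (∀ α β : List ℤ, (∀ s ∈ α, s = 1 ∨ s = -1) → NonnegPrefixes α → α.sum = 1 →
      IsDyckMeanderCat β →
      φ (1 :: (α ++ -2 :: β)) = 1 :: (φ (α ++ [-1]) ++ -1 :: φ β)) ∧
  (∀ (α β : List ℤ) (i : ℕ), 3 ≤ i → (∀ s ∈ α, s = 1 ∨ s = -1) → NonnegPrefixes α →
      α.sum = (i : ℤ) - 1 → IsDyckMeanderCat β →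
      φ (1 :: (α ++ (-(i : ℤ)) :: β)) = 1 :: -1 :: (φ (α ++ [-((i : ℤ) - 1)]) ++ φ β))

/-!
Induction on the length. A nonempty meander starts with `U`; after it, the path either never
comes back to the axis (the case `φ(Uα)`), or it splits at its first return as `U α s β`, where
`α` is a `±1` path staying weakly above height `1`, `s` is `D` or a catastrophe `D_i`, and `β` is
again a meander. The arguments of `φ` on the right-hand sides (`α`, `αD`, `αD_{i-1}`, `β`) are
shorter meanders, and each right-hand side wraps and concatenates their images with exactly two
new steps per step removed, so it is a Dyck path of twice the length.
-/

-- The path `w` read as starting at height `h` rather than on the axis; recursion on the list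
-- turns the prefix-sum conditions of the definitions above into conditions on single steps.
def IsDyckPrefixFrom : ℤ → List ℤ → Prop
  | h, [] => 0 ≤ h
  | h, x :: w => 0 ≤ h ∧ (x = 1 ∨ x = -1) ∧ IsDyckPrefixFrom (h + x) w

def IsCatMeanderFrom : ℤ → List ℤ → Prop
  | h, [] => 0 ≤ h
  | h, x :: w => 0 ≤ h ∧ (x = 1 ∨ x ≤ -1) ∧ (x ≤ -2 → h + x = 0) ∧ IsCatMeanderFrom (h + x) w

section Heights

variable {h x : ℤ} {w a b : List ℤ}

lemma forall_nonneg_take_sum_cons :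
    (∀ k, 0 ≤ h + ((x :: w).take k).sum) ↔ 0 ≤ h ∧ ∀ k, 0 ≤ h + x + (w.take k).sum := by
  constructor
  · intro H
    refine ⟨by simpa using H 0, fun k => ?_⟩
    have := H (k + 1)
    simp only [List.take_succ_cons, List.sum_cons] at this
    linarith
  · rintro ⟨h0, H⟩ (_ | k)
    · simpa using h0
    · simp only [List.take_succ_cons, List.sum_cons]
      linarith [H k]

lemma forall_catastrophe_lands_cons :
    (∀ i < (x :: w).length, (x :: w).getD i 0 ≤ -2 → h + ((x :: w).take (i + 1)).sum = 0) ↔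
      (x ≤ -2 → h + x = 0) ∧
        ∀ i < w.length, w.getD i 0 ≤ -2 → h + x + (w.take (i + 1)).sum = 0 := by
  constructor
  · intro H
    refine ⟨fun hx => by simpa using H 0 (by simp) (by simpa using hx), fun i hi hw => ?_⟩
    have := H (i + 1) (by simpa using hi) (by simpa using hw)
    simp only [List.take_succ_cons, List.sum_cons] at this
    linarith
  · rintro ⟨h0, H⟩ (_ | i) hi hw
    · simpa using h0 (by simpa using hw)
    · simp only [List.take_succ_cons, List.sum_cons]
      linarith [H i (by simpa using hi) (by simpa using hw)]

lemma isDyckPrefixFrom_iff :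
    IsDyckPrefixFrom h w ↔ (∀ s ∈ w, s = 1 ∨ s = -1) ∧ ∀ k, 0 ≤ h + (w.take k).sum := by
  induction w generalizing h with
  | nil => simp [IsDyckPrefixFrom]
  | cons x w ih =>
    simp only [IsDyckPrefixFrom, ih, List.forall_mem_cons, forall_nonneg_take_sum_cons]
    tauto

lemma isCatMeanderFrom_iff :
    IsCatMeanderFrom h w ↔ (∀ s ∈ w, s = 1 ∨ s ≤ -1) ∧ (∀ k, 0 ≤ h + (w.take k).sum) ∧
      ∀ i < w.length, w.getD i 0 ≤ -2 → h + (w.take (i + 1)).sum = 0 := by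
  induction w generalizing h with
  | nil => simp [IsCatMeanderFrom]
  | cons x w ih =>
    simp only [IsCatMeanderFrom, ih, List.forall_mem_cons, forall_nonneg_take_sum_cons,
      forall_catastrophe_lands_cons]
    tauto

lemma nonnegPrefixes_iff : NonnegPrefixes w ↔ ∀ k, 0 ≤ (w.take k).sum := by
  refine ⟨fun H k => H _ ((List.mem_inits _ _).2 (List.take_prefix k w)), fun H p hp => ?_⟩
  rw [List.prefix_iff_eq_take.1 ((List.mem_inits _ _).1 hp)]
  exact H _

lemma isDyckPrefixFrom_zero_iff :
    IsDyckPrefixFrom 0 w ↔ (∀ s ∈ w, s = 1 ∨ s = -1) ∧ NonnegPrefixes w := by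
  simp [isDyckPrefixFrom_iff, nonnegPrefixes_iff]

lemma isDyckWord_iff : IsDyckWord w ↔ IsDyckPrefixFrom 0 w ∧ w.sum = 0 := by
  rw [isDyckPrefixFrom_zero_iff, IsDyckWord, and_assoc]

lemma isDyckMeanderCat_iff : IsDyckMeanderCat w ↔ IsCatMeanderFrom 0 w := by
  simp [isCatMeanderFrom_iff, IsDyckMeanderCat, nonnegPrefixes_iff]

lemma IsDyckPrefixFrom.nonneg (hw : IsDyckPrefixFrom h w) : 0 ≤ h := by
  cases w with
  | nil => exact hw
  | cons _ _ => exact hw.1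

lemma IsCatMeanderFrom.nonneg (hw : IsCatMeanderFrom h w) : 0 ≤ h := by
  cases w with
  | nil => exact hw
  | cons _ _ => exact hw.1

lemma IsDyckPrefixFrom.mono {h' : ℤ} (hw : IsDyckPrefixFrom h w) (hh : h ≤ h') :
    IsDyckPrefixFrom h' w := by
  induction w generalizing h h' with
  | nil => exact hw.trans hh
  | cons x w ih => exact ⟨hw.1.trans hh, hw.2.1, ih hw.2.2 (by linarith)⟩

lemma IsDyckPrefixFrom.isCatMeanderFrom (hw : IsDyckPrefixFrom h w) : IsCatMeanderFrom h w := by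
  induction w generalizing h with
  | nil => exact hw
  | cons x w ih =>
    obtain ⟨hh, hx, hw⟩ := hw
    exact ⟨hh, hx.imp_right le_of_eq, by omega, ih hw⟩

lemma isDyckPrefixFrom_append :
    IsDyckPrefixFrom h (a ++ b) ↔ IsDyckPrefixFrom h a ∧ IsDyckPrefixFrom (h + a.sum) b := by
  induction a generalizing h with
  | nil => simpa [IsDyckPrefixFrom] using fun hb => hb.nonneg
  | cons x a ih =>
    simp only [List.cons_append, IsDyckPrefixFrom, ih, List.sum_cons, add_assoc, and_assoc]

lemma isCatMeanderFrom_append :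
    IsCatMeanderFrom h (a ++ b) ↔ IsCatMeanderFrom h a ∧ IsCatMeanderFrom (h + a.sum) b := by
  induction a generalizing h with
  | nil => simpa [IsCatMeanderFrom] using fun hb => hb.nonneg
  | cons x a ih =>
    simp only [List.cons_append, IsCatMeanderFrom, ih, List.sum_cons, add_assoc, and_assoc]

lemma IsDyckPrefixFrom.isCatMeanderFrom_append_singleton (ha : IsDyckPrefixFrom h a)
    (hx : x ≤ -1) (hsum : h + a.sum + x = 0) : IsCatMeanderFrom h (a ++ [x]) :=
  isCatMeanderFrom_append.2 ⟨ha.isCatMeanderFrom, by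
    simp only [IsCatMeanderFrom]
    have := ha.nonneg
    omega⟩

-- The decomposition of a meander started at height `h + 1` at its first return to height `h`.
lemma IsCatMeanderFrom.first_return (hh : 0 ≤ h) (hw : IsCatMeanderFrom (h + 1) w) :
    IsDyckPrefixFrom h w ∨ ∃ α s β, w = α ++ s :: β ∧ IsDyckPrefixFrom h α ∧ s ≤ -1 ∧
      h + α.sum + s = -1 ∧ IsCatMeanderFrom 0 β := by
  induction w generalizing h with
  | nil => exact Or.inl hh
  | cons x w ih =>
    obtain ⟨-, hx, hcat, hw⟩ := hw
    by_cases hret : h + 1 + x = 0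
    · exact Or.inr ⟨[], x, w, rfl, hh, by omega, by simp; omega, hret ▸ hw⟩
    have hx' : x = 1 ∨ x = -1 := by have := hw.nonneg; omega
    rcases ih (h := h + x) (by have := hw.nonneg; omega) (by rwa [add_right_comm])
      with hd | ⟨α, s, β, rfl, hα, hs, hsum, hβ⟩
    · exact Or.inl ⟨hh, hx', hd⟩
    · refine Or.inr ⟨x :: α, s, β, rfl, ⟨hh, hx', hα⟩, hs, ?_, hβ⟩
      rw [List.sum_cons]
      omega

end Heights

lemma isDyckWord_nil : IsDyckWord [] :=
  isDyckWord_iff.2 ⟨le_rfl, rfl⟩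

lemma IsDyckWord.append {a b : List ℤ} (ha : IsDyckWord a) (hb : IsDyckWord b) :
    IsDyckWord (a ++ b) := by
  rw [isDyckWord_iff] at *
  refine ⟨isDyckPrefixFrom_append.2 ⟨ha.1, ?_⟩, by simp [ha.2, hb.2]⟩
  simpa [ha.2] using hb.1

lemma IsDyckWord.wrap {a : List ℤ} (ha : IsDyckWord a) : IsDyckWord (1 :: (a ++ [-1])) := by
  rw [isDyckWord_iff] at *
  refine ⟨⟨le_rfl, Or.inl rfl, isDyckPrefixFrom_append.2 ⟨ha.1.mono (by norm_num), ?_⟩⟩,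
    by simp [ha.2]⟩
  simp [IsDyckPrefixFrom, ha.2]

lemma isDyckWord_UD : IsDyckWord [1, -1] :=
  isDyckWord_nil.wrap

theorem PhiSpec.isDyckWord_and_length {φ : List ℤ → List ℤ} (hφ : PhiSpec φ) (P : List ℤ)
    (hP : IsCatMeanderFrom 0 P) : IsDyckWord (φ P) ∧ (φ P).length = 2 * P.length := by
  obtain ⟨h0, h1, h2, h3, h4⟩ := hφ
  induction hn : P.length using Nat.strong_induction_on generalizing P with
  | _ n ih =>
  have IH (R : List ℤ) (hR : R.length < n) (hR0 : IsCatMeanderFrom 0 R) :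
      IsDyckWord (φ R) ∧ (φ R).length = 2 * R.length :=
    ih _ hR R hR0 rfl
  subst hn
  rcases P with _ | ⟨x, Q⟩
  · simpa [h0] using isDyckWord_nil
  obtain ⟨-, hx, -, hQ⟩ := hP
  obtain rfl : x = 1 := by have := hQ.nonneg; omega
  rcases hQ.first_return le_rfl with hQ | ⟨α, s, β, rfl, hα, hs, hsum, hβ⟩
  · obtain ⟨hD, hL⟩ := IH Q (by simp) hQ.isCatMeanderFrom
    have hQ' := isDyckPrefixFrom_zero_iff.1 hQ
    rw [h1 Q hQ'.1 hQ'.2]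
    exact ⟨isDyckWord_UD.append hD, by simp only [List.length_cons, hL]; ring⟩
  have hα' := isDyckPrefixFrom_zero_iff.1 hα
  have hβ' := isDyckMeanderCat_iff.2 hβ
  obtain ⟨hDβ, hLβ⟩ := IH β (by simp; omega) hβ
  obtain rfl | rfl | hs3 : s = -1 ∨ s = -2 ∨ s ≤ -3 := by omega
  · obtain ⟨hDα, hLα⟩ := IH α (by simp) hα.isCatMeanderFrom
    rw [h2 α β hα'.1 hα'.2 (by omega) hβ']
    refine ⟨by simpa using (isDyckWord_UD.append hDα).wrap.append hDβ, ?_⟩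
    simp only [List.length_cons, List.length_append, hLα, hLβ]
    ring
  · obtain ⟨hDγ, hLγ⟩ := IH (α ++ [-1]) (by simp)
      (hα.isCatMeanderFrom_append_singleton le_rfl (by omega))
    rw [h3 α β hα'.1 hα'.2 (by omega) hβ']
    refine ⟨by simpa using hDγ.wrap.append hDβ, ?_⟩
    simp only [List.length_cons, List.length_append, List.length_nil, hLγ, hLβ]
    ring
  · obtain ⟨i, rfl⟩ : ∃ i : ℕ, s = -(i : ℤ) := ⟨(-s).toNat, by omega⟩
    obtain ⟨hDγ, hLγ⟩ := IH (α ++ [-((i : ℤ) - 1)]) (by simp)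
      (hα.isCatMeanderFrom_append_singleton (by omega) (by omega))
    rw [h4 α β i (by omega) hα'.1 hα'.2 (by omega) hβ']
    refine ⟨isDyckWord_UD.append (hDγ.append hDβ), ?_⟩
    simp only [List.length_cons, List.length_append, List.length_nil, hLγ, hLβ]
    ring

/-- The map φ sends every Dyck meander with catastrophes of length n to a Dyck path
of semilength n. -/
theorem stmt_4 (φ : List ℤ → List ℤ) (hφ : PhiSpec φ) (n : ℕ) (P : List ℤ)
    (hP : IsDyckMeanderCat P) (hn : P.length = n) :
    IsDyckWord (φ P) ∧ (φ P).length = 2 * n :=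
  hn ▸ hφ.isDyckWord_and_length P (isDyckMeanderCat_iff.1 hP)
end

section
/- If P is a Dyck path of semilength n (viewed as a meander with catastrophes containing no catastrophe steps, ending at height 0), then φ(P) is a Dyck path of semilength 2n that avoids the factors UUU and DUD and, if nonempty, starts with UUD. -/
lemma nonneg_iff_take (w : List ℤ) : NonnegPrefixes w ↔ ∀ n, 0 ≤ (w.take n).sum := by
  constructor
  · intro h n
    exact h _ ((List.mem_inits _ _).2 (List.take_prefix n w))
  · intro h p hp
    have hpre := (List.mem_inits _ _).1 hp
    rw [List.prefix_iff_eq_take.1 hpre]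
    exact h _

lemma occ3_iff (a b c : ℤ) (w : List ℤ) (i : ℕ) :
    OccursAt [a,b,c] w i ↔ w[i]? = some a ∧ w[i+1]? = some b ∧ w[i+2]? = some c := by
  constructor
  · rintro ⟨t, ht⟩
    have h0 : (w.drop i)[0]? = some a := by rw [← ht]; rfl
    have h1 : (w.drop i)[1]? = some b := by rw [← ht]; rfl
    have h2 : (w.drop i)[2]? = some c := by rw [← ht]; simp
    rw [List.getElem?_drop] at h0 h1 h2
    exact ⟨h0, h1, h2⟩
  · rintro ⟨h0, h1, h2⟩
    have e0 : (w.drop i)[0]? = some a := by rw [List.getElem?_drop]; exact h0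
    have e1 : (w.drop i)[1]? = some b := by rw [List.getElem?_drop]; exact h1
    have e2 : (w.drop i)[2]? = some c := by rw [List.getElem?_drop]; exact h2
    rcases hd : w.drop i with _ | ⟨u, _ | ⟨v, _ | ⟨s, t⟩⟩⟩ <;> rw [hd] at e0 e1 e2
    · simp at e0
    · simp at e1
    · simp at e2
    · simp only [List.getElem?_cons_zero, List.getElem?_cons_succ, Option.some_inj] at e0 e1 e2
      subst e0; subst e1; subst e2
      exact ⟨t, hd.symm⟩

lemma dyck_last (x : List ℤ) (hx : IsDyckWord x) (hne : x ≠ []) :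
    x[x.length - 1]? = some (-1) := by
  obtain ⟨q, a, rfl⟩ := (List.eq_nil_or_concat x).resolve_left hne
  have hq : 0 ≤ q.sum := by
    have := (nonneg_iff_take _).1 hx.2.1 q.length
    simpa [List.take_left] using this
  have hs : q.sum + a = 0 := by simpa using hx.2.2
  have ha : a = 1 ∨ a = -1 := hx.1 a (by simp)
  have : a = -1 := by rcases ha with h|h <;> omega
  subst this
  simp

lemma dyck_isMeanderCat (w : List ℤ) (h : IsDyckWord w) : IsDyckMeanderCat w := by
  obtain ⟨hsteps, hnn, hsum⟩ := h
  refine ⟨fun s hs => ?_, hnn, fun i hi hg => ?_⟩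
  · rcases hsteps s hs with h|h <;> omega
  · exfalso
    rw [List.getD_eq_getElem w 0 hi] at hg
    rcases hsteps w[i] (List.getElem_mem hi) with h|h <;> omega
lemma dyck_decomp (P : List ℤ) (hP : IsDyckWord P) (hne : P ≠ []) :
    ∃ α β, IsDyckWord α ∧ IsDyckWord β ∧ P = 1 :: (α ++ -1 :: β) := by
  obtain ⟨hsteps, hnn, hsum⟩ := hP
  rcases P with _ | ⟨a, r⟩
  · exact absurd rfl hne
  have ha : a = 1 := by
    have h1 : 0 ≤ ((a :: r).take 1).sum := (nonneg_iff_take _).1 hnn 1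
    simp at h1
    rcases hsteps a (by simp) with h|h <;> omega
  subst ha
  have hrsum : r.sum = -1 := by simp at hsum; omega
  have hrne : r ≠ [] := by rintro rfl; simp at hrsum
  have hrlen : 1 ≤ r.length := List.length_pos_iff.2 hrne
  have hS : ∀ k, -1 ≤ (r.take k).sum := by
    intro k
    have := (nonneg_iff_take _).1 hnn (k+1)
    simp [List.take_succ_cons] at this
    omega
  have hex : ∃ k, (r.take (k+1)).sum = -1 := by
    refine ⟨r.length - 1, ?_⟩
    have he : r.length - 1 + 1 = r.length := by omega
    rw [he, List.take_length]
    exact hrsum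
  set j := Nat.find hex with hjdef
  have hj : (r.take (j+1)).sum = -1 := Nat.find_spec hex
  have hmin : ∀ k, k < j → (r.take (k+1)).sum ≠ -1 := fun k hk => Nat.find_min hex hk
  have hjlen : j < r.length := by
    have hle : j ≤ r.length - 1 := Nat.find_le (by
      have he : r.length - 1 + 1 = r.length := by omega
      rw [he, List.take_length]
      exact hrsum)
    omega
  have hS0 : ∀ k, k ≤ j → 0 ≤ (r.take k).sum := by
    intro k hk
    cases k with
    | zero => simp
    | succ t =>
      have h1 := hS (t+1)
      have h2 := hmin t (by omega)
      omega
  have hstep : (r.take (j+1)).sum = (r.take j).sum + r[j] := List.sum_take_succ r j hjlen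
  have hrj : r[j] = 1 ∨ r[j] = -1 :=
    hsteps _ (List.mem_cons_of_mem _ (List.getElem_mem hjlen))
  have hSj0 : (r.take j).sum = 0 := by
    have := hS0 j le_rfl
    rcases hrj with h|h <;> omega
  have hrjv : r[j] = -1 := by
    have := hS0 j le_rfl
    rcases hrj with h|h <;> omega
  have hr : r = r.take j ++ -1 :: r.drop (j+1) := by
    conv_lhs => rw [← List.take_append_drop j r]
    rw [List.drop_eq_getElem_cons hjlen, hrjv]
  refine ⟨r.take j, r.drop (j+1), ⟨?_, ?_, hSj0⟩, ⟨?_, ?_, ?_⟩, by rw [← hr]⟩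
  · intro s hs
    exact hsteps s (List.mem_cons_of_mem _ (List.mem_of_mem_take hs))
  · rw [nonneg_iff_take]
    intro n
    rw [List.take_take]
    exact hS0 _ (min_le_right n j)
  · intro s hs
    exact hsteps s (List.mem_cons_of_mem _ (List.mem_of_mem_drop hs))
  · rw [nonneg_iff_take]
    intro n
    have hadd : (r.take (j+1+n)).sum = (r.take (j+1)).sum + ((r.drop (j+1)).take n).sum := by
      rw [List.take_add, List.sum_append]
    have := hS (j+1+n)
    omega
  · have hc := congrArg List.sum hr
    rw [List.sum_append, List.sum_cons] at hc
    omega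
def Good (w : List ℤ) : Prop :=
  IsDyckWord w ∧ Avoids pUUU w ∧ Avoids pDUD w ∧ (w ≠ [] → pUUD <+: w)

lemma good_nil : Good [] := by
  refine ⟨⟨by simp, ?_, rfl⟩, ?_, ?_, by simp⟩
  · intro p hp
    have : p = [] := by simpa using hp
    simp [this]
  · intro i h
    obtain ⟨t, ht⟩ := h
    simp [pUUU] at ht
  · intro i h
    obtain ⟨t, ht⟩ := h
    simp [pDUD] at ht

lemma good_glue (x y : List ℤ) (hx : Good x) (hy : Good y) :
    Good (1 :: 1 :: -1 :: (x ++ -1 :: y)) := by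
  obtain ⟨⟨hxs, hxn, hxsum⟩, hxU, hxD, hxp⟩ := hx
  obtain ⟨⟨hys, hyn, hysum⟩, hyU, hyD, hyp⟩ := hy
  set m := x.length with hm
  set w : List ℤ := x ++ -1 :: y with hw
  -- getElem? facts
  have hwm : w[m]? = some (-1) := by
    rw [hw, List.getElem?_append_right (le_of_eq hm.symm)]
    simp [hm]
  have hwx : ∀ j, j < m → w[j]? = x[j]? := by
    intro j hj
    rw [hw, List.getElem?_append_left (by omega)]
  have hwy : ∀ j, w[m+1+j]? = y[j]? := by
    intro j
    rw [hw, List.getElem?_append_right (by omega)]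
    have e : m + 1 + j - x.length = j + 1 := by omega
    rw [e, List.getElem?_cons_succ]
  have hz3 : ∀ j, (1 :: 1 :: -1 :: w)[j+3]? = w[j]? := by
    intro j
    rw [Nat.add_comm j 3, ← List.getElem?_drop]
    rfl
  -- prefix sums of w
  have hwk : ∀ k, -1 ≤ (w.take k).sum := by
    intro k
    rw [hw, List.take_append, List.sum_append]
    have h1 : 0 ≤ (x.take k).sum := (nonneg_iff_take x).1 hxn k
    have h2 : -1 ≤ (((-1 : ℤ) :: y).take (k - x.length)).sum := by
      rcases Nat.eq_zero_or_pos (k - x.length) with h|h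
      · simp [h]
      · obtain ⟨t, ht⟩ : ∃ t, k - x.length = t + 1 := ⟨k - x.length - 1, by omega⟩
        rw [ht, List.take_succ_cons, List.sum_cons]
        have := (nonneg_iff_take y).1 hyn t
        omega
    omega
  refine ⟨⟨?_, ?_, ?_⟩, ?_, ?_, fun _ => ⟨w, rfl⟩⟩
  · -- steps
    intro s hs
    simp only [hw, List.mem_cons, List.mem_append] at hs
    rcases hs with rfl|rfl|rfl|hs|hs
    · exact Or.inl rfl
    · exact Or.inl rfl
    · exact Or.inr rfl
    · exact hxs _ hs
    · rcases hs with rfl|hs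
      · exact Or.inr rfl
      · exact hys _ hs
  · -- nonneg prefixes
    rw [nonneg_iff_take]
    intro n
    rcases n with _|_|_|k
    · simp
    · simp
    · simp
    · simp only [List.take_succ_cons, List.sum_cons]
      have := hwk k
      omega
  · -- sum
    simp [hw, List.sum_append, hxsum, hysum]
  · -- Avoids UUU
    intro i hocc
    have hocc' : OccursAt [1,1,1] (1 :: 1 :: -1 :: w) i := hocc
    rw [occ3_iff] at hocc'
    obtain ⟨h0, h1, h2⟩ := hocc'
    rcases i with _|_|_|j
    · simp at h2
    · simp at h1
    · simp at h0
    · rw [hz3] at h0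
      have e1 : j + 1 + 1 + 1 + 1 = (j+1) + 3 := by omega
      have e2 : j + 1 + 1 + 1 + 2 = (j+2) + 3 := by omega
      rw [e1, hz3] at h1
      rw [e2, hz3] at h2
      have hnem : ∀ k, w[k]? = some 1 → k ≠ m := by
        intro k hk hkm
        rw [hkm, hwm] at hk
        simp at hk
      have n0 := hnem _ h0
      have n1 := hnem _ h1
      have n2 := hnem _ h2
      rcases (by omega : j + 2 < m ∨ m + 1 ≤ j) with hc|hc
      · rw [hwx j (by omega)] at h0
        rw [hwx _ (by omega)] at h1
        rw [hwx _ (by omega)] at h2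
        exact hxU j ((occ3_iff 1 1 1 x j).2 ⟨h0, h1, h2⟩)
      · obtain ⟨k, rfl⟩ : ∃ k, j = m + 1 + k := ⟨j - m - 1, by omega⟩
        rw [hwy k] at h0
        have e3 : m + 1 + k + 1 = m + 1 + (k+1) := by omega
        have e4 : m + 1 + k + 2 = m + 1 + (k+2) := by omega
        rw [e3, hwy] at h1
        rw [e4, hwy] at h2
        exact hyU k ((occ3_iff 1 1 1 y k).2 ⟨h0, h1, h2⟩)
  · -- Avoids DUD
    intro i hocc
    have hocc' : OccursAt [-1,1,-1] (1 :: 1 :: -1 :: w) i := hocc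
    rw [occ3_iff] at hocc'
    obtain ⟨h0, h1, h2⟩ := hocc'
    rcases i with _|_|_|j
    · simp at h0
    · simp at h0
    · -- i = 2 : need w[0]? = some 1, w[1]? = some (-1)
      have e1 : (2:ℕ) + 1 = 0 + 3 := by omega
      have e2 : (2:ℕ) + 2 = 1 + 3 := by omega
      rw [e1, hz3] at h1
      rw [e2, hz3] at h2
      rcases eq_or_ne x [] with rfl|hxne
      · rw [hw] at h1
        simp at h1
      · obtain ⟨t, ht⟩ := hxp hxne
        have hxl : 3 ≤ m := by rw [hm, ← ht]; simp [pUUD]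
        rw [hwx 1 (by omega), ← ht] at h2
        simp [pUUD] at h2
    · rw [hz3] at h0
      have e1 : j + 1 + 1 + 1 + 1 = (j+1) + 3 := by omega
      have e2 : j + 1 + 1 + 1 + 2 = (j+2) + 3 := by omega
      rw [e1, hz3] at h1
      rw [e2, hz3] at h2
      rcases (by omega : j + 2 < m ∨ j + 2 = m ∨ j + 1 = m ∨ j = m ∨ m + 1 ≤ j) with hc|hc|hc|hc|hc
      · rw [hwx j (by omega)] at h0
        rw [hwx _ (by omega)] at h1
        rw [hwx _ (by omega)] at h2
        exact hxD j ((occ3_iff (-1) 1 (-1) x j).2 ⟨h0, h1, h2⟩)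
      · -- j+2 = m : x would end with a 1
        have hxne : x ≠ [] := by
          intro hxe
          rw [hxe] at hm
          simp at hm
          omega
        have hlast := dyck_last x ⟨hxs, hxn, hxsum⟩ hxne
        rw [hwx _ (by omega)] at h1
        have e : x.length - 1 = j + 1 := by omega
        rw [e] at hlast
        rw [hlast] at h1
        simp at h1
      · rw [hc, hwm] at h1
        simp at h1
      · have e3 : j + 1 = m + 1 + 0 := by omega
        have e4 : j + 2 = m + 1 + 1 := by omega
        rw [e3, hwy] at h1
        rw [e4, hwy] at h2
        have hyne : y ≠ [] := by
          intro hye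
          rw [hye] at h1
          simp at h1
        obtain ⟨t, ht⟩ := hyp hyne
        rw [← ht] at h2
        simp [pUUD] at h2
      · obtain ⟨k, rfl⟩ : ∃ k, j = m + 1 + k := ⟨j - m - 1, by omega⟩
        rw [hwy k] at h0
        have e3 : m + 1 + k + 1 = m + 1 + (k+1) := by omega
        have e4 : m + 1 + k + 2 = m + 1 + (k+2) := by omega
        rw [e3, hwy] at h1
        rw [e4, hwy] at h2
        exact hyD k ((occ3_iff (-1) 1 (-1) y k).2 ⟨h0, h1, h2⟩)
lemma phi_good (φ : List ℤ → List ℤ) (hφ : PhiSpec φ) :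
    ∀ N P, P.length ≤ N → IsDyckWord P → Good (φ P) ∧ (φ P).length = 2 * P.length := by
  intro N
  induction N with
  | zero =>
    intro P hl hP
    have hPe : P = [] := List.length_eq_zero_iff.1 (Nat.le_zero.1 hl)
    subst hPe
    rw [hφ.1]
    exact ⟨good_nil, rfl⟩
  | succ N ih =>
    intro P hl hP
    rcases eq_or_ne P [] with rfl | hne
    · rw [hφ.1]
      exact ⟨good_nil, rfl⟩
    obtain ⟨α, β, hα, hβ, rfl⟩ := dyck_decomp P hP hne
    have hlP : (1 :: (α ++ -1 :: β)).length = α.length + β.length + 2 := by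
      simp
      omega
    have hαN : α.length ≤ N := by omega
    have hβN : β.length ≤ N := by omega
    obtain ⟨hgα, hlα⟩ := ih α hαN hα
    obtain ⟨hgβ, hlβ⟩ := ih β hβN hβ
    rw [hφ.2.2.1 α β hα.1 hα.2.1 hα.2.2 (dyck_isMeanderCat β hβ)]
    refine ⟨good_glue _ _ hgα hgβ, ?_⟩
    simp only [List.length_cons, List.length_append, hlα, hlβ, hlP]
    omega


/-- If P is a Dyck path of semilength n then φ(P) is a Dyck path of semilength 2n
avoiding UUU and DUD which, if nonempty, starts with UUD. -/
theorem stmt_6 (φ : List ℤ → List ℤ) (hφ : PhiSpec φ) (n : ℕ) (P : List ℤ)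
    (hP : IsDyckWord P) (hn : P.length = 2 * n) :
    IsDyckWord (φ P) ∧ (φ P).length = 2 * (2 * n) ∧
      Avoids pUUU (φ P) ∧ Avoids pDUD (φ P) ∧ (φ P ≠ [] → pUUD <+: φ P) := by
  obtain ⟨⟨hd, hU, hD, hp⟩, hlen⟩ := phi_good φ hφ P.length P le_rfl hP
  exact ⟨hd, by rw [hlen, hn], hU, hD, hp⟩
end

section
/- There exists a bijection between the set of Motzkin meanders with catastrophes of length n and the set of Dyck paths of semilength n+1 avoiding the factor UUU at height h ≥ 2. -/
/-!
Both sides are counted by size (Motzkin-type paths by length, Dyck paths by their number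
`count 1` of up steps) and shown to satisfy the same convolution recurrences, so they have the
same cardinality. Every excursion factors uniquely as a primitive excursion (one that
touches height `0` only at its ends) followed by an excursion. A primitive catastrophe excursion
of length `m + 2` is `U u` followed by the unique step back to `0`, with `u` a Motzkin meander
of length `m`; a primitive Dyck path of semilength `m + 1` avoiding `UUU` at height `≥ t` is
`U u D` with `u` avoiding `UUU` at height `≥ t - 1` (and, for `t = 0`, not starting with `UU`).
This reduces height `≥ 2` to height `≥ 1`, which matches the last-return decomposition of Motzkin
meanders, and that in turn to avoidance everywhere, which matches Motzkin paths through
`UD ↔ F` and `UUD u D ↔ U u D`. Finally, appending the step `-h` to a meander ending at height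
`h` identifies Motzkin meanders with catastrophes of length `n` with catastrophe excursions of
length `n + 1`.
-/

open Finset Cardinal Function

def IsPathFrom (step : ℤ → ℤ → Prop) : ℤ → List ℤ → Prop
  | _, [] => True
  | h, x :: w => step h x ∧ IsPathFrom step (h + x) w

section IsPathFrom

variable {step step' : ℤ → ℤ → Prop}

@[simp] theorem isPathFrom_nil (h : ℤ) : IsPathFrom step h [] := trivial

@[simp] theorem isPathFrom_cons (h x : ℤ) (w : List ℤ) :
    IsPathFrom step h (x :: w) ↔ step h x ∧ IsPathFrom step (h + x) w := Iff.rfl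

theorem isPathFrom_append (h : ℤ) (a b : List ℤ) :
    IsPathFrom step h (a ++ b) ↔ IsPathFrom step h a ∧ IsPathFrom step (h + a.sum) b := by
  induction a generalizing h with
  | nil => simp
  | cons x a ih => simp [ih, and_assoc, add_assoc]

theorem isPathFrom_congr (H : ∀ h x, step h x ↔ step' h x) (h : ℤ) (w : List ℤ) :
    IsPathFrom step h w ↔ IsPathFrom step' h w := by
  induction w generalizing h with
  | nil => simp
  | cons x w ih => simp [H, ih]

theorem isPathFrom_and (h : ℤ) (w : List ℤ) :
    IsPathFrom (fun h x => step h x ∧ step' h x) h w ↔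
      IsPathFrom step h w ∧ IsPathFrom step' h w := by
  induction w generalizing h with
  | nil => simp
  | cons x w ih => simp only [isPathFrom_cons, ih]; tauto

theorem isPathFrom_add (c h : ℤ) (w : List ℤ) :
    IsPathFrom step (h + c) w ↔ IsPathFrom (fun h x => step (h + c) x) h w := by
  induction w generalizing h with
  | nil => simp
  | cons x w ih => simp [← ih, add_right_comm]

theorem IsPathFrom.mono (hmono : ∀ h h' x, h ≤ h' → step h x → step h' x) {h h' : ℤ}
    (hh : h ≤ h') {w : List ℤ} (hw : IsPathFrom step h w) : IsPathFrom step h' w := by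
  induction w generalizing h h' with
  | nil => trivial
  | cons x w ih => exact ⟨hmono h h' x hh hw.1, ih (by omega) hw.2⟩

theorem isPathFrom_iff_forall_mem (S : ℤ → Prop) (h : ℤ) (w : List ℤ) :
    IsPathFrom (fun _ x => S x) h w ↔ ∀ x ∈ w, S x := by
  induction w generalizing h with
  | nil => simp
  | cons x w ih => simp [ih]

theorem isPathFrom_iff_forall_lt_length (Q : ℤ → ℤ → Prop) (h : ℤ) (w : List ℤ) :
    IsPathFrom (fun h x => Q x (h + x)) h w ↔
      ∀ k < w.length, Q (w.getD k 0) (h + (w.take (k + 1)).sum) := by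
  induction w generalizing h with
  | nil => simp
  | cons x w ih =>
    simp only [isPathFrom_cons, ih, List.length_cons, Nat.forall_lt_succ_left,
      List.getD_cons_zero, List.getD_cons_succ, List.take_succ_cons, List.sum_cons,
      List.take_zero, List.sum_nil, add_zero, add_assoc]

theorem isPathFrom_nonneg_iff {h : ℤ} (hh : 0 ≤ h) (w : List ℤ) :
    IsPathFrom (fun h x => 0 ≤ h + x) h w ↔ ∀ p ∈ w.inits, 0 ≤ h + p.sum := by
  induction w generalizing h with
  | nil => simpa using hh
  | cons x w ih =>
    simp only [isPathFrom_cons, List.inits_cons, List.forall_mem_cons, List.forall_mem_map,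
      List.sum_nil, add_zero, List.sum_cons, ← add_assoc, and_iff_right hh]
    refine ⟨fun ⟨hx, hw⟩ => (ih hx).1 hw, fun H => ?_⟩
    have hx : 0 ≤ h + x := by simpa using H [] ((List.mem_inits _ _).2 (List.nil_prefix))
    exact ⟨hx, (ih hx).2 H⟩

theorem IsPathFrom.nonneg_add_sum_take (hstep : ∀ h x, step h x → 0 ≤ h + x) {h : ℤ}
    (hh : 0 ≤ h) {w : List ℤ} (hw : IsPathFrom step h w) (k : ℕ) :
    0 ≤ h + (w.take k).sum := by
  induction w generalizing h k with
  | nil => simpa using hh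
  | cons x w ih =>
    cases k with
    | zero => simpa using hh
    | succ k => simpa [add_assoc] using ih (hstep h x hw.1) hw.2 k

theorem IsPathFrom.nonneg_add_sum (hstep : ∀ h x, step h x → 0 ≤ h + x) {h : ℤ}
    (hh : 0 ≤ h) {w : List ℤ} (hw : IsPathFrom step h w) : 0 ≤ h + w.sum := by
  simpa using hw.nonneg_add_sum_take hstep hh w.length

end IsPathFrom

def motzkinStep (h x : ℤ) : Prop := (x = 1 ∨ x = 0 ∨ x = -1) ∧ 0 ≤ h + x

def dyckStep (h x : ℤ) : Prop := (x = 1 ∨ x = -1) ∧ 0 ≤ h + x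

def catastropheStep (h x : ℤ) : Prop := x ≤ 1 ∧ 0 ≤ h + x ∧ (x ≤ -2 → h + x = 0)

def IsExcursion (step : ℤ → ℤ → Prop) (w : List ℤ) : Prop := IsPathFrom step 0 w ∧ w.sum = 0

theorem isMotzkinMeanderCat_iff (w : List ℤ) :
    IsMotzkinMeanderCat w ↔ IsPathFrom catastropheStep 0 w := by
  unfold catastropheStep
  rw [IsMotzkinMeanderCat, NonnegPrefixes, isPathFrom_and, isPathFrom_and,
    isPathFrom_iff_forall_mem, isPathFrom_nonneg_iff le_rfl,
    isPathFrom_iff_forall_lt_length (fun x y => x ≤ -2 → y = 0)]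
  simp only [zero_add]

theorem isDyckWord_iff_s11 (w : List ℤ) : IsDyckWord w ↔ IsExcursion dyckStep w := by
  unfold IsExcursion dyckStep
  rw [IsDyckWord, NonnegPrefixes, isPathFrom_and, isPathFrom_iff_forall_mem,
    isPathFrom_nonneg_iff le_rfl]
  simp only [zero_add, and_assoc]

theorem length_add_sum_eq_two_mul_count {w : List ℤ} (hw : ∀ x ∈ w, x = 1 ∨ x = -1) :
    (w.length : ℤ) + w.sum = 2 * w.count 1 := by
  induction w with
  | nil => simp
  | cons x w ih =>
    have := ih fun y hy => hw y (List.mem_cons_of_mem x hy)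
    rcases hw x List.mem_cons_self with rfl | rfl <;> simp <;> omega

theorem IsDyckWord.length_eq_two_mul_count {w : List ℤ} (hw : IsDyckWord w) :
    w.length = 2 * w.count 1 := by
  have := length_add_sum_eq_two_mul_count hw.1
  rw [hw.2.2] at this
  omega

theorem eq_one_of_isPathFrom_dyckStep_cons {x : ℤ} {w : List ℤ}
    (h : IsPathFrom dyckStep 0 (x :: w)) : x = 1 := by
  obtain ⟨⟨hx | hx, hnn⟩, -⟩ := h
  · exact hx
  · omega

section IsExcursion

variable {step : ℤ → ℤ → Prop}

theorem isExcursion_append {p : List ℤ} (hp : p.sum = 0) (r : List ℤ) :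
    IsExcursion step (p ++ r) ↔ IsExcursion step p ∧ IsExcursion step r := by
  simp only [IsExcursion, isPathFrom_append, List.sum_append, hp, zero_add]
  tauto

theorem getLast?_ne_some_one_of_isExcursion (hstep : ∀ h x, step h x → 0 ≤ h + x)
    {p : List ℤ} (hp : IsExcursion step p) : p.getLast? ≠ some 1 := by
  obtain rfl | ⟨q, x, rfl⟩ := List.eq_nil_or_concat' p
  · simp
  rw [List.getLast?_concat, ne_eq, Option.some_inj]
  rintro rfl
  have hq := ((isPathFrom_append 0 q [1]).1 hp.1).1.nonneg_add_sum hstep le_rfl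
  have := hp.2
  simp only [List.sum_append, List.sum_singleton] at this
  omega

end IsExcursion

def IsPrimitive (w : List ℤ) : Prop :=
  w ≠ [] ∧ w.sum = 0 ∧ ∀ k, 0 < k → k < w.length → (w.take k).sum ≠ 0

theorem IsPrimitive.append_inj {p p' r r' : List ℤ} (hp : IsPrimitive p) (hp' : IsPrimitive p')
    (h : p ++ r = p' ++ r') : p = p' ∧ r = r' := by
  suffices key : ∀ {p p' r r' : List ℤ}, IsPrimitive p → IsPrimitive p' → p ++ r = p' ++ r' →
      p.length ≤ p'.length from
    List.append_inj h (le_antisymm (key hp hp' h) (key hp' hp h.symm))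
  intro p p' r r' hp hp' h
  by_contra! hlt
  apply hp.2.2 p'.length (List.length_pos_iff.2 hp'.1) hlt
  have := congrArg (List.take p'.length) h
  rw [List.take_append_of_le_length hlt.le, List.take_left' rfl] at this
  rw [this, hp'.2.1]

theorem exists_isPrimitive_append {w : List ℤ} (hne : w ≠ []) (hsum : w.sum = 0) :
    ∃ p r, IsPrimitive p ∧ w = p ++ r := by
  classical
  have hex : ∃ k, 0 < k ∧ (w.take k).sum = 0 :=
    ⟨w.length, List.length_pos_iff.2 hne, by simpa using hsum⟩
  obtain ⟨hk0, hk⟩ := Nat.find_spec hex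
  refine ⟨w.take (Nat.find hex), w.drop (Nat.find hex), ⟨?_, hk, fun j hj hjk => ?_⟩,
    (List.take_append_drop _ w).symm⟩
  · simp [List.take_eq_nil_iff, hk0.ne', hne]
  · have hjk' : j < Nat.find hex := by have := List.length_take_le (Nat.find hex) w; omega
    rw [List.take_take, min_eq_left hjk'.le]
    exact fun h0 => Nat.find_min hex hjk' ⟨hj, h0⟩

theorem mk_biUnion_eq_sum {α : Type u} {ι : Type*} (s : Finset ι) (S : ι → Set α)
    (h : (s : Set ι).PairwiseDisjoint S) : #(⋃ i ∈ s, S i) = ∑ i ∈ s, #(S i) := by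
  classical
  induction s using Finset.induction_on with
  | empty => simp
  | insert a s ha ih =>
    rw [Finset.set_biUnion_insert, Finset.sum_insert ha, mk_union_of_disjoint,
      ih (h.subset (by simp))]
    refine Set.disjoint_iUnion₂_right.2 fun i hi => h (by simp) (by simp [hi]) ?_
    rintro rfl
    exact ha hi

theorem mk_image2_eq_mul {α β γ : Type u} {f : α → β → γ} {A : Set α} {B : Set β}
    (h : Set.InjOn (uncurry f) (A ×ˢ B)) : #(Set.image2 f A B) = #A * #B := by
  rw [← Set.image_uncurry_prod, mk_image_eq_of_injOn _ _ h, mk_congr (Equiv.Set.prod A B),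
    mk_prod, lift_id, lift_id]

theorem mk_biUnion_image2_eq_sum {α β γ : Type u} (A : ℕ → Set α) (B : ℕ → Set β)
    (f : α → β → γ) (hA : Pairwise (Disjoint on A))
    (hf : ∀ i j i' j', ∀ a ∈ A i, ∀ b ∈ B j, ∀ a' ∈ A i', ∀ b' ∈ B j',
      f a b = f a' b' → a = a' ∧ b = b') (n : ℕ) :
    #(⋃ x ∈ antidiagonal n, Set.image2 f (A x.1) (B x.2)) =
      ∑ x ∈ antidiagonal n, #(A x.1) * #(B x.2) := by
  rw [mk_biUnion_eq_sum]
  · refine Finset.sum_congr rfl fun x _ => mk_image2_eq_mul ?_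
    rintro ⟨a, b⟩ ⟨ha, hb⟩ ⟨a', b'⟩ ⟨ha', hb'⟩ h
    obtain ⟨rfl, rfl⟩ := hf _ _ _ _ a ha b hb a' ha' b' hb' h
    rfl
  · intro x hx y hy hxy
    refine Set.disjoint_left.2 ?_
    rintro _ ⟨a, ha, b, hb, rfl⟩ ⟨a', ha', b', hb', h⟩
    obtain ⟨rfl, rfl⟩ := hf _ _ _ _ a' ha' b' hb' a ha b hb h
    have h1 : x.1 = y.1 := by
      by_contra hne
      exact Set.disjoint_left.1 (hA hne) ha ha'
    exact hxy ((HasAntidiagonal.antidiagonal_congr hx hy).2 h1)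

theorem mk_eq_one_of_forall_eq_nil {α : Type*} {s : Set (List α)} (hnil : [] ∈ s)
    (h : ∀ w ∈ s, w = []) : #s = 1 := by
  rw [Set.eq_singleton_iff_unique_mem.2 ⟨hnil, h⟩, mk_singleton]

theorem mk_setOf_length_eq_zero {P : List ℤ → Prop} (hnil : P []) :
    #{w | P w ∧ w.length = 0} = 1 :=
  mk_eq_one_of_forall_eq_nil ⟨hnil, rfl⟩ fun _ hw => List.length_eq_zero_iff.1 hw.2

theorem setOf_eq_iUnion_image2_append {P : List ℤ → Prop} (sz : List ℤ → ℕ)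
    (hsz : ∀ a b, sz (a ++ b) = sz a + sz b) (hsum : ∀ w, P w → w.sum = 0)
    (hP : ∀ p r, IsPrimitive p → (P (p ++ r) ↔ P p ∧ P r))
    (hpos : ∀ p, P p → IsPrimitive p → 0 < sz p) (n : ℕ) :
    {w | P w ∧ sz w = n + 1} = ⋃ x ∈ antidiagonal n, Set.image2 (· ++ ·)
      {p | (P p ∧ IsPrimitive p) ∧ sz p = x.1 + 1} {w | P w ∧ sz w = x.2} := by
  ext w
  simp only [Set.mem_ofPred_eq, Set.mem_iUnion, Set.mem_image2, HasAntidiagonal.mem_antidiagonal,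
    exists_prop, Prod.exists]
  constructor
  · rintro ⟨hw, hwn⟩
    have hne : w ≠ [] := by
      rintro rfl
      have := hsz [] []
      simp at this
      omega
    obtain ⟨p, r, hp, rfl⟩ := exists_isPrimitive_append hne (hsum w hw)
    obtain ⟨hPp, hPr⟩ := (hP p r hp).1 hw
    have := hpos p hPp hp
    rw [hsz] at hwn
    exact ⟨sz p - 1, sz r, by omega, p, ⟨⟨hPp, hp⟩, by omega⟩, r, ⟨hPr, rfl⟩, rfl⟩
  · rintro ⟨i, j, hij, p, ⟨⟨hPp, hp⟩, hpi⟩, r, ⟨hPr, hrj⟩, rfl⟩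
    exact ⟨(hP p r hp).2 ⟨hPp, hPr⟩, by rw [hsz]; omega⟩

theorem mk_eq_sum_primitive_mul {P : List ℤ → Prop} (sz : List ℤ → ℕ)
    (hsz : ∀ a b, sz (a ++ b) = sz a + sz b) (hsum : ∀ w, P w → w.sum = 0)
    (hP : ∀ p r, IsPrimitive p → (P (p ++ r) ↔ P p ∧ P r))
    (hpos : ∀ p, P p → IsPrimitive p → 0 < sz p) (n : ℕ) :
    #{w | P w ∧ sz w = n + 1} = ∑ x ∈ antidiagonal n,
      #{p | (P p ∧ IsPrimitive p) ∧ sz p = x.1 + 1} * #{w | P w ∧ sz w = x.2} := by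
  rw [setOf_eq_iUnion_image2_append sz hsz hsum hP hpos,
    mk_biUnion_image2_eq_sum (fun i => {p | (P p ∧ IsPrimitive p) ∧ sz p = i + 1})
      (fun j => {w | P w ∧ sz w = j})]
  · intro i j hij
    refine Set.disjoint_left.2 fun p hp hp' => hij ?_
    have := hp.2.symm.trans hp'.2
    omega
  · rintro i j i' j' p ⟨⟨-, hp⟩, -⟩ r - p' ⟨⟨-, hp'⟩, -⟩ r' - h
    exact hp.append_inj hp' h

theorem mk_isExcursion_length_succ {step : ℤ → ℤ → Prop} (n : ℕ) :
    #{w | IsExcursion step w ∧ w.length = n + 1} = ∑ x ∈ antidiagonal n,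
      #{p | (IsExcursion step p ∧ IsPrimitive p) ∧ p.length = x.1 + 1} *
        #{w | IsExcursion step w ∧ w.length = x.2} :=
  mk_eq_sum_primitive_mul List.length (fun _ _ => List.length_append) (fun _ hw => hw.2)
    (fun _ r hp => isExcursion_append hp.2.1 r) (fun _ _ hp => List.length_pos_iff.2 hp.1) n

theorem eq_of_convolution_recurrence {R : Type*} [AddCommMonoid R] [Mul R] {a b p q : ℕ → R}
    (h0 : a 0 = b 0) (ha : ∀ n, a (n + 1) = ∑ x ∈ antidiagonal n, p (x.1 + 1) * a x.2)
    (hb : ∀ n, b (n + 1) = ∑ x ∈ antidiagonal n, q (x.1 + 1) * b x.2)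
    (hpq : ∀ n, (∀ m ≤ n, a m = b m) → p (n + 1) = q (n + 1)) (n : ℕ) : a n = b n := by
  induction n using Nat.strong_induction_on with
  | _ n ih =>
    cases n with
    | zero => exact h0
    | succ n =>
      rw [ha, hb]
      refine Finset.sum_congr rfl fun x hx => ?_
      have hx := HasAntidiagonal.mem_antidiagonal.1 hx
      rw [hpq x.1 fun m hm => ih m (by omega), ih x.2 (by omega)]

/-- Go up, follow `u` one level higher, and return to height `0` in a single step (a down step
if `u` ends at height `0`, a catastrophe otherwise). -/
def elevate (u : List ℤ) : List ℤ := 1 :: (u ++ [-(1 + u.sum)])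

theorem elevate_injective : Injective elevate := fun _ _ h =>
  (List.append_inj' (List.cons_injective h) rfl).1

theorem sum_elevate (u : List ℤ) : (elevate u).sum = 0 := by
  simp [elevate]

theorem isPrimitive_elevate_iff (u : List ℤ) :
    IsPrimitive (elevate u) ↔ ∀ k < u.length + 1, 1 + (u.take k).sum ≠ 0 := by
  unfold IsPrimitive
  rw [and_iff_right (by simp [elevate]), and_iff_right (sum_elevate u)]
  constructor
  · intro H k hk
    simpa [elevate, List.take_append_of_le_length (show k ≤ u.length by omega)] using
      H (k + 1) (by omega) (by simp [elevate]; omega)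
  · rintro H (_ | k) hk0 hk
    · omega
    · simp only [elevate, List.length_cons, List.length_append, List.length_nil] at hk
      simpa [elevate, List.take_append_of_le_length (show k ≤ u.length by omega)] using
        H k (by omega)

theorem isExcursion_elevate_and_isPrimitive_iff {step : ℤ → ℤ → Prop}
    (hstep : ∀ h x, step h x → 0 ≤ h + x) (u : List ℤ) :
    IsExcursion step (elevate u) ∧ IsPrimitive (elevate u) ↔
      step 0 1 ∧ IsPathFrom (fun h x => step (h + 1) x ∧ 0 ≤ h + x) 0 u ∧
        step (1 + u.sum) (-(1 + u.sum)) := by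
  -- primitivity of `elevate u` says that `u`, started at height `1`, never touches `0`
  have hinterior : IsPathFrom step 1 u ∧ IsPrimitive (elevate u) ↔
      IsPathFrom (fun h x => step (h + 1) x ∧ 0 ≤ h + x) 0 u := by
    rw [isPrimitive_elevate_iff, Nat.forall_lt_succ_left, List.take_zero, List.sum_nil,
      add_zero, and_iff_right one_ne_zero,
      ← isPathFrom_iff_forall_lt_length (fun _ y => y ≠ 0), ← isPathFrom_and]
    refine (isPathFrom_add 1 0 u).trans (isPathFrom_congr (fun h x => ?_) 0 u)
    constructor
    · rintro ⟨hs, hne⟩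
      have := hstep _ _ hs
      exact ⟨hs, by omega⟩
    · rintro ⟨hs, hnn⟩
      exact ⟨hs, by omega⟩
  rw [IsExcursion, and_iff_left (sum_elevate u), ← hinterior, elevate, isPathFrom_cons,
    isPathFrom_append]
  simp only [isPathFrom_cons, isPathFrom_nil, and_true, zero_add]
  tauto

theorem eq_elevate_of_isPrimitive {step : ℤ → ℤ → Prop}
    (hstep : ∀ h x, step h x → x ≤ 1 ∧ 0 ≤ h + x) {p : List ℤ} (hp : IsPathFrom step 0 p)
    (hprim : IsPrimitive p) (hlen : 2 ≤ p.length) : ∃ u, p = elevate u := by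
  obtain _ | ⟨x, q⟩ := p
  · simp at hlen
  have hx := hstep 0 x hp.1
  have hx0 : x ≠ 0 := by simpa using hprim.2.2 1 one_pos hlen
  obtain rfl : x = 1 := by omega
  obtain rfl | ⟨u, s, rfl⟩ := List.eq_nil_or_concat' q
  · simp at hlen
  refine ⟨u, ?_⟩
  have hsum := hprim.2.1
  simp only [List.sum_cons, List.sum_append, List.sum_nil, add_zero] at hsum
  rw [elevate, show s = -(1 + u.sum) by omega]

theorem mk_isPrimitive_eq_mk_of_elevate {P Q : List ℤ → Prop} (sz : List ℤ → ℕ) {d : ℕ}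
    (hQ : ∀ u, Q u ↔ P (elevate u) ∧ IsPrimitive (elevate u))
    (hshape : ∀ p, P p → IsPrimitive p → d ≤ sz p → ∃ u, p = elevate u)
    (hsz : ∀ u, Q u → sz (elevate u) = sz u + d) (m : ℕ) :
    #{p | (P p ∧ IsPrimitive p) ∧ sz p = m + d} = #{u | Q u ∧ sz u = m} := by
  refine (mk_congr (Set.BijOn.equiv elevate ⟨?_, elevate_injective.injOn, ?_⟩)).symm
  · rintro u ⟨hu, rfl⟩
    exact ⟨(hQ u).1 hu, hsz u hu⟩
  · rintro p ⟨⟨hPp, hp⟩, hsp⟩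
    obtain ⟨u, rfl⟩ := hshape p hPp hp (by omega)
    have hu := (hQ u).2 ⟨hPp, hp⟩
    exact ⟨u, ⟨hu, by have := hsz u hu; omega⟩, rfl⟩

theorem setOf_isPrimitive_length_eq_one {P : List ℤ → Prop} (hP : P [0]) :
    {p | (P p ∧ IsPrimitive p) ∧ p.length = 1} = {[0]} := by
  ext p
  simp only [Set.mem_ofPred_eq, Set.mem_singleton_iff, List.length_eq_one_iff]
  constructor
  · rintro ⟨⟨-, hp⟩, x, rfl⟩
    simpa using hp.2.1
  · rintro rfl
    exact ⟨⟨hP, List.cons_ne_nil _ _, by simp, fun k hk hk1 => by simp at hk1; omega⟩, 0, rfl⟩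

theorem mk_motzkin_isPrimitive_length_add_two (m : ℕ) :
    #{p | (IsExcursion motzkinStep p ∧ IsPrimitive p) ∧ p.length = m + 2} =
      #{u | IsExcursion motzkinStep u ∧ u.length = m} := by
  refine mk_isPrimitive_eq_mk_of_elevate List.length (fun u => ?_)
    (fun p hp hprim hlen => eq_elevate_of_isPrimitive
      (fun h x hs => ⟨by have := hs.1; omega, hs.2⟩) hp.1 hprim hlen)
    (fun u _ => by simp [elevate]) m
  rw [isExcursion_elevate_and_isPrimitive_iff (fun _ _ hs => hs.2),
    isPathFrom_congr (step := fun h x => motzkinStep (h + 1) x ∧ 0 ≤ h + x)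
      (step' := motzkinStep) (fun h x => by simp only [motzkinStep]; omega)]
  constructor
  · rintro ⟨hu, hsum⟩
    exact ⟨by norm_num [motzkinStep], hu, by simp [motzkinStep, hsum]⟩
  · rintro ⟨-, hu, hlast⟩
    have := hu.nonneg_add_sum (fun _ _ hs => hs.2) le_rfl
    simp only [motzkinStep] at hlast
    exact ⟨hu, by omega⟩

theorem mk_catastrophe_isPrimitive_length_add_two (m : ℕ) :
    #{p | (IsExcursion catastropheStep p ∧ IsPrimitive p) ∧ p.length = m + 2} =
      #{u | IsPathFrom motzkinStep 0 u ∧ u.length = m} := by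
  refine mk_isPrimitive_eq_mk_of_elevate List.length (fun u => ?_)
    (fun p hp hprim hlen => eq_elevate_of_isPrimitive (fun h x hs => ⟨hs.1, hs.2.1⟩)
      hp.1 hprim hlen) (fun u _ => by simp [elevate]) m
  rw [isExcursion_elevate_and_isPrimitive_iff (fun _ _ hs => hs.2.1),
    isPathFrom_congr (step := fun h x => catastropheStep (h + 1) x ∧ 0 ≤ h + x)
      (step' := motzkinStep) (fun h x => by simp only [motzkinStep, catastropheStep]; omega)]
  simp only [catastropheStep]
  refine ⟨fun hu => ?_, fun h => h.2.1⟩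
  have := hu.nonneg_add_sum (fun _ _ hs => hs.2) le_rfl
  exact ⟨by norm_num, hu, by omega, by omega, fun _ => by omega⟩

theorem exists_eq_append_one_cons {w : List ℤ} (hw : IsPathFrom motzkinStep 0 w)
    (hsum : w.sum ≠ 0) :
    ∃ c u, w = c ++ 1 :: u ∧ IsExcursion motzkinStep c ∧ IsPathFrom motzkinStep 0 u := by
  induction w using List.reverseRecOn with
  | nil => simp at hsum
  | append_singleton v x ih =>
    rw [isPathFrom_append, isPathFrom_cons, zero_add] at hw
    obtain ⟨hv, ⟨hx, hxnn⟩, -⟩ := hw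
    rw [List.sum_append, List.sum_singleton] at hsum
    by_cases hv0 : v.sum = 0
    · exact ⟨v, [], by rw [show x = 1 by omega], ⟨hv, hv0⟩, trivial⟩
    · obtain ⟨c, u, rfl, hc, hu⟩ := ih hv hv0
      have hcu : (c ++ 1 :: u).sum = 1 + u.sum := by simp [hc.2]
      refine ⟨c, u ++ [x], by simp, hc, ?_⟩
      rw [isPathFrom_append, isPathFrom_cons, zero_add]
      exact ⟨hu, ⟨hx, by omega⟩, trivial⟩

theorem append_one_cons_inj {c c' u u' : List ℤ} (hc : c.sum = 0) (hc' : c'.sum = 0)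
    (hu : IsPathFrom motzkinStep 0 u) (hu' : IsPathFrom motzkinStep 0 u')
    (h : c ++ 1 :: u = c' ++ 1 :: u') : c = c' ∧ u = u' := by
  suffices key : ∀ {c c' u u' : List ℤ}, c.sum = 0 → c'.sum = 0 → IsPathFrom motzkinStep 0 u →
      c ++ 1 :: u = c' ++ 1 :: u' → c'.length ≤ c.length by
    obtain ⟨rfl, h1⟩ := List.append_inj h (le_antisymm (key hc' hc hu' h.symm) (key hc hc' hu h))
    exact ⟨rfl, List.cons_injective h1⟩
  intro c c' u u' hc hc' hu h
  by_contra! hlt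
  obtain ⟨k, hk⟩ := Nat.exists_eq_add_of_lt hlt
  have h0 : ((c ++ 1 :: u).take c'.length).sum = 0 := by rw [h, List.take_left' rfl, hc']
  rw [hk, add_assoc, List.take_length_add_append, List.take_succ_cons, List.sum_append,
    List.sum_cons, hc] at h0
  have := hu.nonneg_add_sum_take (fun _ _ hs => hs.2) le_rfl k
  omega

theorem setOf_motzkinMeander_length_succ (n : ℕ) :
    {w | IsPathFrom motzkinStep 0 w ∧ w.length = n + 1} =
      {w | IsExcursion motzkinStep w ∧ w.length = n + 1} ∪
        ⋃ x ∈ antidiagonal n, Set.image2 (fun c u => c ++ 1 :: u)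
          {c | IsExcursion motzkinStep c ∧ c.length = x.1}
          {u | IsPathFrom motzkinStep 0 u ∧ u.length = x.2} := by
  ext w
  simp only [Set.mem_union, Set.mem_ofPred_eq, Set.mem_iUnion, Set.mem_image2,
    HasAntidiagonal.mem_antidiagonal, exists_prop, Prod.exists]
  constructor
  · rintro ⟨hw, hlen⟩
    by_cases hsum : w.sum = 0
    · exact Or.inl ⟨⟨hw, hsum⟩, hlen⟩
    · obtain ⟨c, u, rfl, hc, hu⟩ := exists_eq_append_one_cons hw hsum
      simp only [List.length_append, List.length_cons] at hlen
      exact Or.inr ⟨c.length, u.length, by omega, c, ⟨hc, rfl⟩, u, ⟨hu, rfl⟩, rfl⟩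
  · rintro (⟨hw, hlen⟩ | ⟨i, j, hij, c, ⟨hc, rfl⟩, u, ⟨hu, rfl⟩, rfl⟩)
    · exact ⟨hw.1, hlen⟩
    · refine ⟨?_, by simp; omega⟩
      rw [isPathFrom_append, hc.2, isPathFrom_cons]
      exact ⟨hc.1, by norm_num [motzkinStep],
        hu.mono (fun _ _ _ hle hs => ⟨hs.1, by have := hs.2; omega⟩) (by norm_num)⟩

theorem mk_motzkinMeander_length_succ (n : ℕ) :
    #{w | IsPathFrom motzkinStep 0 w ∧ w.length = n + 1} =
      #{w | IsExcursion motzkinStep w ∧ w.length = n + 1} + ∑ x ∈ antidiagonal n,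
        #{c | IsExcursion motzkinStep c ∧ c.length = x.1} *
          #{u | IsPathFrom motzkinStep 0 u ∧ u.length = x.2} := by
  rw [setOf_motzkinMeander_length_succ, mk_union_of_disjoint, mk_biUnion_image2_eq_sum
    (fun i => {c | IsExcursion motzkinStep c ∧ c.length = i})
    (fun j => {u | IsPathFrom motzkinStep 0 u ∧ u.length = j}) (fun c u => c ++ 1 :: u)]
  · intro i j hij
    exact Set.disjoint_left.2 fun c hc hc' => hij (hc.2.symm.trans hc'.2)
  · rintro i j i' j' c ⟨hc, -⟩ u ⟨hu, -⟩ c' ⟨hc', -⟩ u' ⟨hu', -⟩ h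
    exact append_one_cons_inj hc.2 hc'.2 hu hu' h
  · refine Set.disjoint_left.2 ?_
    rintro w ⟨hw, -⟩ hw'
    simp only [Set.mem_iUnion, Set.mem_image2] at hw'
    obtain ⟨x, -, c, ⟨hc, -⟩, u, ⟨hu, -⟩, rfl⟩ := hw'
    have := hu.nonneg_add_sum (fun _ _ hs => hs.2) le_rfl
    have := hw.2
    simp [hc.2] at this
    omega

theorem mk_catastropheMeander_eq_mk_catastropheExcursion (n : ℕ) :
    #{w | IsPathFrom catastropheStep 0 w ∧ w.length = n} =
      #{w | IsExcursion catastropheStep w ∧ w.length = n + 1} := by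
  refine mk_congr (Set.BijOn.equiv (fun w => w ++ [-w.sum]) ⟨?_, ?_, ?_⟩)
  · rintro w ⟨hw, rfl⟩
    have := hw.nonneg_add_sum (fun _ _ hs => hs.2.1) le_rfl
    refine ⟨⟨(isPathFrom_append 0 w _).2 ⟨hw, ?_, trivial⟩, by simp⟩, by simp⟩
    simp only [catastropheStep]
    omega
  · intro w _ w' _ h
    exact (List.append_inj' h (by simp)).1
  · rintro e ⟨⟨he, hsum⟩, hlen⟩
    obtain rfl | ⟨w, x, rfl⟩ := List.eq_nil_or_concat' e
    · simp at hlen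
    rw [List.sum_append, List.sum_singleton] at hsum
    refine ⟨w, ⟨((isPathFrom_append 0 w _).1 he).1, by simpa using hlen⟩, ?_⟩
    simp only [show x = -w.sum by omega]

def AvoidsUUUAtHeightGe (t : ℤ) : ℤ → List ℤ → Prop
  | _, [] => True
  | h, x :: w => (pUUU <+: x :: w → h < t) ∧ AvoidsUUUAtHeightGe t (h + x) w

section AvoidsUUUAtHeightGe

variable {t : ℤ}

@[simp] theorem avoidsUUUAtHeightGe_nil (h : ℤ) : AvoidsUUUAtHeightGe t h [] := trivial

@[simp] theorem avoidsUUUAtHeightGe_cons (h x : ℤ) (w : List ℤ) :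
    AvoidsUUUAtHeightGe t h (x :: w) ↔
      (pUUU <+: x :: w → h < t) ∧ AvoidsUUUAtHeightGe t (h + x) w :=
  Iff.rfl

theorem forall_occursAt_iff_avoidsUUUAtHeightGe (h : ℤ) (w : List ℤ) :
    (∀ i, OccursAt pUUU w i → h + (w.take i).sum < t) ↔ AvoidsUUUAtHeightGe t h w := by
  induction w generalizing h with
  | nil => simp [OccursAt, pUUU]
  | cons x w ih =>
    rw [avoidsUUUAtHeightGe_cons, ← ih]
    constructor
    · intro H
      exact ⟨fun hp => by simpa using H 0 hp, fun i hi => by simpa [add_assoc] using H (i + 1) hi⟩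
    · rintro ⟨H0, H⟩ (_ | i) hi
      · simpa using H0 hi
      · simpa [add_assoc] using H i hi

theorem avoidsAtHeightGe2_iff (w : List ℤ) :
    AvoidsAtHeightGe2 pUUU w ↔ AvoidsUUUAtHeightGe 2 0 w := by
  rw [← forall_occursAt_iff_avoidsUUUAtHeightGe, AvoidsAtHeightGe2]
  simp only [zero_add]

theorem avoidsUUUAtHeightGe_add (c h : ℤ) (w : List ℤ) :
    AvoidsUUUAtHeightGe t (h + c) w ↔ AvoidsUUUAtHeightGe (t - c) h w := by
  induction w generalizing h with
  | nil => simp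
  | cons x w ih =>
    rw [avoidsUUUAtHeightGe_cons, avoidsUUUAtHeightGe_cons, add_right_comm, ih]
    exact and_congr_left' (imp_congr_right fun _ => by omega)

theorem prefix_append_cons_iff {α : Type*} {pat u r : List α} {x : α} (hx : x ∉ pat) :
    pat <+: u ++ x :: r ↔ pat <+: u := by
  refine ⟨fun h => ?_, fun h => h.trans (List.prefix_append _ _)⟩
  by_contra hu
  have hlt : u.length < pat.length :=
    lt_of_not_ge fun hle => hu (List.prefix_of_prefix_length_le h (List.prefix_append _ _) hle)
  have hx' : pat[u.length] = x := by simpa using h.getElem hlt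
  exact hx (hx' ▸ List.getElem_mem hlt)

theorem avoidsUUUAtHeightGe_append_cons {x : ℤ} (hx : x ≠ 1) (h : ℤ) (q r : List ℤ) :
    AvoidsUUUAtHeightGe t h (q ++ x :: r) ↔
      AvoidsUUUAtHeightGe t h q ∧ AvoidsUUUAtHeightGe t (h + q.sum + x) r := by
  induction q generalizing h with
  | nil => simp [pUUU, Ne.symm hx]
  | cons y q ih =>
    rw [List.cons_append, avoidsUUUAtHeightGe_cons, avoidsUUUAtHeightGe_cons, ih,
      ← List.cons_append, prefix_append_cons_iff (by simp [pUUU, hx])]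
    simp [and_assoc, add_assoc]

theorem avoidsUUUAtHeightGe_append {p : List ℤ} (hp : p.getLast? ≠ some 1) (h : ℤ)
    (r : List ℤ) :
    AvoidsUUUAtHeightGe t h (p ++ r) ↔
      AvoidsUUUAtHeightGe t h p ∧ AvoidsUUUAtHeightGe t (h + p.sum) r := by
  obtain rfl | ⟨q, x, rfl⟩ := List.eq_nil_or_concat' p
  · simp
  have hx : x ≠ 1 := by simpa using hp
  rw [List.append_assoc, List.singleton_append, avoidsUUUAtHeightGe_append_cons hx,
    avoidsUUUAtHeightGe_append_cons hx]
  simp [add_assoc]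

theorem avoidsUUUAtHeightGe_one_cons_neg_one_cons (h : ℤ) (v : List ℤ) :
    AvoidsUUUAtHeightGe t h (1 :: -1 :: v) ↔ AvoidsUUUAtHeightGe t h v := by
  simp [pUUU]

theorem avoidsUUUAtHeightGe_iff_of_nonpos {step : ℤ → ℤ → Prop}
    (hstep : ∀ h x, step h x → 0 ≤ h + x) {t' h : ℤ} (ht : t ≤ 0) (ht' : t' ≤ 0) (hh : 0 ≤ h)
    {w : List ℤ} (hw : IsPathFrom step h w) :
    AvoidsUUUAtHeightGe t h w ↔ AvoidsUUUAtHeightGe t' h w := by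
  induction w generalizing h with
  | nil => simp
  | cons x w ih =>
    rw [avoidsUUUAtHeightGe_cons, avoidsUUUAtHeightGe_cons, ih (hstep h x hw.1) hw.2]
    exact and_congr_left' ⟨fun H hp => absurd (H hp) (by omega),
      fun H hp => absurd (H hp) (by omega)⟩

theorem avoidsUUUAtHeightGe_elevate {u : List ℤ} (hu : u.sum = 0) :
    AvoidsUUUAtHeightGe t 0 (elevate u) ↔
      ([1, 1] <+: u → 0 < t) ∧ AvoidsUUUAtHeightGe (t - 1) 0 u := by
  rw [elevate, hu, add_zero, avoidsUUUAtHeightGe_cons, pUUU, List.cons_prefix_cons,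
    prefix_append_cons_iff (by simp), avoidsUUUAtHeightGe_append_cons (by norm_num),
    ← avoidsUUUAtHeightGe_add]
  simp

end AvoidsUUUAtHeightGe

def IsDyckAvoidingUUU (t : ℤ) (w : List ℤ) : Prop :=
  IsExcursion dyckStep w ∧ AvoidsUUUAtHeightGe t 0 w

theorem IsPrimitive.two_le_length_of_isPathFrom_dyckStep {p : List ℤ} (hprim : IsPrimitive p)
    (hp : IsPathFrom dyckStep 0 p) : 2 ≤ p.length := by
  obtain _ | ⟨x, _ | ⟨y, w⟩⟩ := p
  · exact absurd rfl hprim.1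
  · have := eq_one_of_isPathFrom_dyckStep_cons hp
    have := hprim.2.1
    simp_all
  · simp

theorem mk_setOf_count_one_eq_zero {P : List ℤ → Prop} (hP : ∀ w, P w → IsPathFrom dyckStep 0 w)
    (hnil : P []) : #{w | P w ∧ w.count 1 = 0} = 1 := by
  refine mk_eq_one_of_forall_eq_nil ⟨hnil, rfl⟩ fun u hu => ?_
  obtain _ | ⟨x, w⟩ := u
  · rfl
  · have := hu.2
    rw [eq_one_of_isPathFrom_dyckStep_cons (hP _ hu.1)] at this
    simp at this

theorem mk_isDyckAvoidingUUU_count_eq_zero (t : ℤ) :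
    #{w | IsDyckAvoidingUUU t w ∧ w.count 1 = 0} = 1 :=
  mk_setOf_count_one_eq_zero (fun _ hw => hw.1.1) ⟨⟨trivial, rfl⟩, trivial⟩

theorem mk_isDyckAvoidingUUU_count_succ (t : ℤ) (n : ℕ) :
    #{w | IsDyckAvoidingUUU t w ∧ w.count 1 = n + 1} = ∑ x ∈ antidiagonal n,
      #{p | (IsDyckAvoidingUUU t p ∧ IsPrimitive p) ∧ p.count 1 = x.1 + 1} *
        #{w | IsDyckAvoidingUUU t w ∧ w.count 1 = x.2} := by
  refine mk_eq_sum_primitive_mul (List.count 1) (fun _ _ => List.count_append)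
    (fun _ hw => hw.1.2) (fun p r hp => ?_) (fun p hPp hp => ?_) n
  · -- `p` ends with a down step, so no `UUU` straddles `p` and `r`
    have hlast := getLast?_ne_some_one_of_isExcursion (step := dyckStep) (p := p)
      (fun _ _ hs => hs.2)
    unfold IsDyckAvoidingUUU
    rw [isExcursion_append hp.2.1]
    constructor
    · rintro ⟨⟨hp', hr⟩, hav⟩
      rw [avoidsUUUAtHeightGe_append (hlast hp'), zero_add, hp.2.1] at hav
      exact ⟨⟨hp', hav.1⟩, hr, hav.2⟩
    · rintro ⟨⟨hp', hpav⟩, hr, hrav⟩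
      rw [avoidsUUUAtHeightGe_append (hlast hp'), zero_add, hp.2.1]
      exact ⟨⟨hp', hr⟩, hpav, hrav⟩
  · obtain _ | ⟨x, w⟩ := p
    · exact absurd rfl hp.1
    · rw [eq_one_of_isPathFrom_dyckStep_cons hPp.1.1]
      simp

theorem mk_isDyckAvoidingUUU_isPrimitive (t : ℤ) (m : ℕ) :
    #{p | (IsDyckAvoidingUUU t p ∧ IsPrimitive p) ∧ p.count 1 = m + 1} =
      #{u | (IsDyckAvoidingUUU (t - 1) u ∧ ([1, 1] <+: u → 0 < t)) ∧ u.count 1 = m} := by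
  refine mk_isPrimitive_eq_mk_of_elevate (List.count 1) (fun u => ?_)
    (fun p hp hprim _ => eq_elevate_of_isPrimitive
      (fun h x hs => ⟨by rcases hs.1 with hx | hx <;> omega, hs.2⟩) hp.1.1 hprim
      (hprim.two_le_length_of_isPathFrom_dyckStep hp.1.1))
    (fun u hu => by simp [elevate, hu.1.1.2]) m
  unfold IsDyckAvoidingUUU
  conv_rhs => rw [and_right_comm]
  rw [isExcursion_elevate_and_isPrimitive_iff (fun _ _ hs => hs.2),
    isPathFrom_congr (step := fun h x => dyckStep (h + 1) x ∧ 0 ≤ h + x) (step' := dyckStep)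
      (fun h x => by simp only [dyckStep]; omega)]
  constructor
  · rintro ⟨⟨⟨hu, hsum⟩, hav⟩, h11⟩
    exact ⟨⟨by norm_num [dyckStep], hu, by simp [dyckStep, hsum]⟩,
      (avoidsUUUAtHeightGe_elevate hsum).2 ⟨h11, hav⟩⟩
  · rintro ⟨⟨-, hu, hlast⟩, hav⟩
    have := hu.nonneg_add_sum (fun _ _ hs => hs.2) le_rfl
    have hsum : u.sum = 0 := by simp only [dyckStep] at hlast; omega
    obtain ⟨h11, hav'⟩ := (avoidsUUUAtHeightGe_elevate hsum).1 hav
    exact ⟨⟨⟨hu, hsum⟩, hav'⟩, h11⟩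

theorem mk_isDyckAvoidingUUU_isPrimitive_of_pos {t : ℤ} (ht : 0 < t) (m : ℕ) :
    #{p | (IsDyckAvoidingUUU t p ∧ IsPrimitive p) ∧ p.count 1 = m + 1} =
      #{u | IsDyckAvoidingUUU (t - 1) u ∧ u.count 1 = m} := by
  simp only [mk_isDyckAvoidingUUU_isPrimitive, ht, implies_true, and_true]

theorem mk_isDyckAvoidingUUU_zero_isPrimitive_count_eq_one :
    #{p | (IsDyckAvoidingUUU 0 p ∧ IsPrimitive p) ∧ p.count 1 = 0 + 1} = 1 := by
  rw [mk_isDyckAvoidingUUU_isPrimitive]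
  exact mk_setOf_count_one_eq_zero (fun _ hu => hu.1.1.1)
    ⟨⟨⟨trivial, rfl⟩, trivial⟩, fun h => by simpa using h.length_le⟩

theorem mk_isDyckAvoidingUUU_zero_isPrimitive_count_add_two (m : ℕ) :
    #{p | (IsDyckAvoidingUUU 0 p ∧ IsPrimitive p) ∧ p.count 1 = (m + 1) + 1} =
      #{v | IsDyckAvoidingUUU 0 v ∧ v.count 1 = m} := by
  have hav : ∀ {v}, IsPathFrom dyckStep 0 v →
      (AvoidsUUUAtHeightGe (0 - 1) 0 v ↔ AvoidsUUUAtHeightGe 0 0 v) := fun hv =>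
    avoidsUUUAtHeightGe_iff_of_nonpos (fun _ _ hs => hs.2) (by norm_num) le_rfl le_rfl hv
  rw [mk_isDyckAvoidingUUU_isPrimitive]
  refine (mk_congr (Set.BijOn.equiv (fun v => 1 :: -1 :: v) ⟨?_, ?_, ?_⟩)).symm
  · rintro v ⟨⟨⟨hv, hsum⟩, hv0⟩, rfl⟩
    refine ⟨⟨⟨⟨⟨by norm_num [dyckStep], by norm_num [dyckStep], hv⟩, by simpa using hsum⟩,
      (avoidsUUUAtHeightGe_one_cons_neg_one_cons 0 v).2 ((hav hv).2 hv0)⟩, fun h => ?_⟩,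
      by simp⟩
    simp at h
  · intro v _ v' _ h
    simpa using h
  · rintro u ⟨⟨⟨⟨hu, hsum⟩, hav0⟩, h11⟩, hcount⟩
    obtain _ | ⟨x, w⟩ := u
    · simp at hcount
    obtain rfl := eq_one_of_isPathFrom_dyckStep_cons hu
    obtain _ | ⟨y, v⟩ := w
    · simp at hsum
    obtain ⟨-, ⟨hy, -⟩, hv⟩ := hu
    obtain rfl : y = -1 := by
      rcases hy with rfl | rfl
      · exact absurd (h11 (by simp)) (lt_irrefl 0)
      · rfl
    refine ⟨v, ⟨⟨⟨by simpa using hv, by simpa using hsum⟩, ?_⟩, by simpa using hcount⟩, rfl⟩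
    exact (hav (by simpa using hv)).1 ((avoidsUUUAtHeightGe_one_cons_neg_one_cons 0 v).1 hav0)

theorem mk_isDyckAvoidingUUU_zero_eq_mk_motzkin (n : ℕ) :
    #{w | IsDyckAvoidingUUU 0 w ∧ w.count 1 = n} =
      #{w | IsExcursion motzkinStep w ∧ w.length = n} := by
  refine eq_of_convolution_recurrence
    (a := fun k => #{w | IsDyckAvoidingUUU 0 w ∧ w.count 1 = k})
    (b := fun k => #{w | IsExcursion motzkinStep w ∧ w.length = k})
    (p := fun k => #{p | (IsDyckAvoidingUUU 0 p ∧ IsPrimitive p) ∧ p.count 1 = k})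
    (q := fun k => #{p | (IsExcursion motzkinStep p ∧ IsPrimitive p) ∧ p.length = k})
    ?_ (mk_isDyckAvoidingUUU_count_succ 0) mk_isExcursion_length_succ (fun n ih => ?_) n
  · rw [mk_isDyckAvoidingUUU_count_eq_zero, mk_setOf_length_eq_zero ⟨trivial, rfl⟩]
  · cases n with
    | zero =>
      rw [mk_isDyckAvoidingUUU_zero_isPrimitive_count_eq_one,
        setOf_isPrimitive_length_eq_one (by norm_num [IsExcursion, motzkinStep]), mk_singleton]
    | succ m =>
      rw [mk_isDyckAvoidingUUU_zero_isPrimitive_count_add_two,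
        mk_motzkin_isPrimitive_length_add_two, ih m (by omega)]

theorem mk_isDyckAvoidingUUU_one_count_succ_eq_mk_motzkinMeander (m : ℕ) :
    #{w | IsDyckAvoidingUUU 1 w ∧ w.count 1 = m + 1} =
      #{w | IsPathFrom motzkinStep 0 w ∧ w.length = m} := by
  induction m using Nat.strong_induction_on with
  | _ m ih =>
    rw [mk_isDyckAvoidingUUU_count_succ]
    simp only [mk_isDyckAvoidingUUU_isPrimitive_of_pos one_pos, sub_self,
      mk_isDyckAvoidingUUU_zero_eq_mk_motzkin]
    cases m with
    | zero =>
      rw [Finset.Nat.antidiagonal_zero, Finset.sum_singleton, mk_isDyckAvoidingUUU_count_eq_zero,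
        mk_setOf_length_eq_zero ⟨trivial, rfl⟩, mk_setOf_length_eq_zero trivial, mul_one]
    | succ n =>
      rw [Finset.Nat.sum_antidiagonal_succ', mk_isDyckAvoidingUUU_count_eq_zero, mul_one,
        mk_motzkinMeander_length_succ]
      refine congrArg _ (Finset.sum_congr rfl fun x hx => ?_)
      rw [ih x.2 (by have := HasAntidiagonal.mem_antidiagonal.1 hx; omega)]

theorem mk_isDyckAvoidingUUU_two_eq_mk_catastropheExcursion (n : ℕ) :
    #{w | IsDyckAvoidingUUU 2 w ∧ w.count 1 = n} =
      #{w | IsExcursion catastropheStep w ∧ w.length = n} := by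
  refine eq_of_convolution_recurrence
    (a := fun k => #{w | IsDyckAvoidingUUU 2 w ∧ w.count 1 = k})
    (b := fun k => #{w | IsExcursion catastropheStep w ∧ w.length = k})
    (p := fun k => #{p | (IsDyckAvoidingUUU 2 p ∧ IsPrimitive p) ∧ p.count 1 = k})
    (q := fun k => #{p | (IsExcursion catastropheStep p ∧ IsPrimitive p) ∧ p.length = k})
    ?_ (mk_isDyckAvoidingUUU_count_succ 2) mk_isExcursion_length_succ (fun n _ => ?_) n
  · rw [mk_isDyckAvoidingUUU_count_eq_zero, mk_setOf_length_eq_zero ⟨trivial, rfl⟩]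
  · simp only [mk_isDyckAvoidingUUU_isPrimitive_of_pos two_pos]
    norm_num only
    cases n with
    | zero =>
      rw [mk_isDyckAvoidingUUU_count_eq_zero,
        setOf_isPrimitive_length_eq_one (by norm_num [IsExcursion, catastropheStep]),
        mk_singleton]
    | succ m =>
      rw [mk_isDyckAvoidingUUU_one_count_succ_eq_mk_motzkinMeander,
        mk_catastrophe_isPrimitive_length_add_two]

theorem isDyckAvoidingUUU_two_and_count_eq_iff (w : List ℤ) (n : ℕ) :
    IsDyckAvoidingUUU 2 w ∧ w.count 1 = n ↔
      IsDyckWord w ∧ w.length = 2 * n ∧ AvoidsAtHeightGe2 pUUU w := by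
  rw [IsDyckAvoidingUUU, ← isDyckWord_iff_s11, ← avoidsAtHeightGe2_iff]
  constructor
  · rintro ⟨⟨hw, hav⟩, hcount⟩
    exact ⟨hw, by rw [hw.length_eq_two_mul_count, hcount], hav⟩
  · rintro ⟨hw, hlen, hav⟩
    exact ⟨⟨hw, hav⟩, by rw [hw.length_eq_two_mul_count] at hlen; omega⟩

/-- Motzkin meanders with catastrophes of length n are in bijection with Dyck paths
of semilength n+1 avoiding the factor UUU at height h ≥ 2. -/
theorem stmt_11 (n : ℕ) :
    ∃ f : {w : List ℤ // IsMotzkinMeanderCat w ∧ w.length = n} →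
      {w : List ℤ // IsDyckWord w ∧ w.length = 2 * (n + 1) ∧
        AvoidsAtHeightGe2 pUUU w},
      Function.Bijective f := by
  have hcard := calc
    #{w : List ℤ // IsMotzkinMeanderCat w ∧ w.length = n}
      = #{w | IsPathFrom catastropheStep 0 w ∧ w.length = n} := by
        simp_rw [isMotzkinMeanderCat_iff]; rfl
    _ = #{w | IsExcursion catastropheStep w ∧ w.length = n + 1} :=
        mk_catastropheMeander_eq_mk_catastropheExcursion n
    _ = #{w | IsDyckAvoidingUUU 2 w ∧ w.count 1 = n + 1} :=
        (mk_isDyckAvoidingUUU_two_eq_mk_catastropheExcursion (n + 1)).symm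
    _ = #{w : List ℤ // IsDyckWord w ∧ w.length = 2 * (n + 1) ∧ AvoidsAtHeightGe2 pUUU w} :=
        mk_congr (Equiv.subtypeEquivRight fun w => isDyckAvoidingUUU_two_and_count_eq_iff w _)
  obtain ⟨e⟩ := Cardinal.eq.1 hcard
  exact ⟨e, e.bijective⟩
end
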